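/- arXiv:1804.02531 — 8 statements merged into one kernel-verified Lean document; each statement's English description precedes it below -/
import Mathlib

section
/- For all integers n and m with n ≥ m ≥ 3, the strict inequality ξ*_{n,m} > ξ_{n,m} holds, where ξ*_{n,m} is the infimum of ρ_{n,L} over the injective length distributions L of length m with UD_n(L) nonempty. -/
open Finset Filter Topology

/-- A code `(v 0, …, v (m-1))` is *uniquely decodable* if any two nonempty sequences of
indices whose corresponding concatenations of code words coincide are equal. -/
def IsUDCode {X : Type*} {m : ℕ} (v : Fin m → List X) : Prop :=
  ∀ s t : List (Fin m), s ≠ [] → t ≠ [] →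
    (s.map v).flatten = (t.map v).flatten → s = t

/-- A *prefix code*: an injective sequence of nonempty words where no code word
is a prefix of another. -/
def IsPrefixCode {X : Type*} {m : ℕ} (v : Fin m → List X) : Prop :=
  Function.Injective v ∧ (∀ i, v i ≠ []) ∧ ∀ i j, i ≠ j → ¬ v i <+: v j

/-- The set of uniquely decodable codes over an `n`-letter alphabet with
length distribution `L`. -/
def UD (n : ℕ) {m : ℕ} (L : Fin m → ℕ) : Set (Fin m → List (Fin n)) :=
  {v | (∀ i, (v i).length = L i) ∧ IsUDCode v}

/-- The set of prefix codes over an `n`-letter alphabet with length distribution `L`. -/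
def PR (n : ℕ) {m : ℕ} (L : Fin m → ℕ) : Set (Fin m → List (Fin n)) :=
  {v | (∀ i, (v i).length = L i) ∧ IsPrefixCode v}

/-- `ρ_{n,L} = |PR_n(L)| / |UD_n(L)|`. -/
noncomputable def rho (n : ℕ) {m : ℕ} (L : Fin m → ℕ) : ℝ :=
  ((PR n L).ncard : ℝ) / ((UD n L).ncard : ℝ)

/-- `ξ_{n,m} = inf_{L ∈ ℒ_{n,m}} ρ_{n,L}`. -/
noncomputable def xi (n m : ℕ) : ℝ :=
  sInf {r : ℝ | ∃ L : Fin m → ℕ, (∀ i, 1 ≤ L i) ∧ (UD n L).Nonempty ∧ r = rho n L}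

/-- `ς_{n,m} = (n - (m mod (n-1))) / n^{⌊m/(n-1)⌋ + 1}`. -/
noncomputable def varsigma (n m : ℕ) : ℝ :=
  ((n : ℝ) - (m % (n - 1) : ℕ)) / (n : ℝ) ^ (m / (n - 1) + 1)

/-- `q_{n,m}`: `1` if `n ≥ m`, and `(m-1)!/(m-1)^{m-1}` if `n < m`. -/
noncomputable def qnm (n m : ℕ) : ℝ :=
  if m ≤ n then 1 else (Nat.factorial (m - 1) : ℝ) / ((m - 1 : ℕ) : ℝ) ^ (m - 1)

/-- `ϖ_{n,m} = ∏_{i=1}^{m-1} (1 - (1 - n^{-i})/(n-1))`. -/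
noncomputable def varpi (n m : ℕ) : ℝ :=
  ∏ i ∈ Finset.Icc 1 (m - 1), (1 - (1 - 1 / (n : ℝ) ^ i) / ((n : ℝ) - 1))

/-- `η_{n,m} = 1 + Σ_{i=1}^{m-1} C(m-1,i)/(n^i - 1)`. -/
noncomputable def eta (n m : ℕ) : ℝ :=
  1 + ∑ i ∈ Finset.Icc 1 (m - 1), ((m - 1).choose i : ℝ) / ((n : ℝ) ^ i - 1)

/-- `ξ*_{n,m} = inf_{L ∈ ℒ*_{n,m}} ρ_{n,L}`, the infimum over injective length
distributions. -/
noncomputable def xiStar (n m : ℕ) : ℝ :=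
  sInf {r : ℝ | ∃ L : Fin m → ℕ, (∀ i, 1 ≤ L i) ∧ Function.Injective L ∧
    (UD n L).Nonempty ∧ r = rho n L}

/-! For an injective length distribution sort the lengths, `b 0 < ⋯ < b M`, and choose the
code words greedily in this order: since `b j ≥ j + 1`, the `i` shorter words already chosen are
prefixes of at most a fraction `x + x ^ 2 + ⋯ + x ^ i` (with `x = 1 / n`) of the words of length
`b i`. Hence `ρ ≥ ∏ i ≤ M, (1 - x - ⋯ - x ^ i) ≥ 1 - M x + x ^ 3` when `M ≥ 2` and `(M + 1) x ≤ 1`.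

For `L = (1, …, 1, k)` with `M` ones, every code made of `M` distinct letters and a word that
contains some other letter is uniquely decodable, whereas a prefix code needs the word to begin
with another letter. Hence `ρ ≤ (1 - M x) / (1 - (M x) ^ k)`, which tends to
`1 - M x < 1 - M x + x ^ 3` as `k → ∞`. -/

section Decoding

variable {X : Type*} {m : ℕ}

theorem isUDCode_of_head_eq {v : Fin m → List X} (hne : ∀ i, v i ≠ [])
    (hhead : ∀ i j (s t : List (Fin m)),
      v i ++ (s.map v).flatten = v j ++ (t.map v).flatten → i = j) :
    IsUDCode v := by
  have flatten_eq_nil {t : List (Fin m)} (h : (t.map v).flatten = []) : t = [] := by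
    cases t with
    | nil => rfl
    | cons j _ => simp [hne j] at h
  suffices ∀ s t : List (Fin m), (s.map v).flatten = (t.map v).flatten → s = t from
    fun s t _ _ => this s t
  intro s t hst
  induction s generalizing t with
  | nil => exact (flatten_eq_nil hst.symm).symm
  | cons i s ih =>
    cases t with
    | nil => simp [hne i] at hst
    | cons j t =>
      simp only [List.map_cons, List.flatten_cons] at hst
      obtain rfl := hhead i j s t hst
      rw [ih t (List.append_cancel_left hst)]

theorem IsPrefixCode.isUDCode {v : Fin m → List X} (hv : IsPrefixCode v) : IsUDCode v := by
  refine isUDCode_of_head_eq hv.2.1 fun i j s t h => ?_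
  by_contra hij
  rcases List.prefix_or_prefix_of_prefix ⟨_, h⟩ ⟨_, rfl⟩ with hp | hp
  · exact hv.2.2 i j hij hp
  · exact hv.2.2 j i (Ne.symm hij) hp

theorem IsPrefixCode.comp_equiv {v : Fin m → List X} (hv : IsPrefixCode v)
    (σ : Equiv.Perm (Fin m)) : IsPrefixCode (v ∘ σ) :=
  ⟨hv.1.comp σ.injective, fun i => hv.2.1 (σ i),
    fun i j hij => hv.2.2 (σ i) (σ j) (σ.injective.ne hij)⟩

theorem IsPrefixCode.snoc {u : Fin m → List X} {w : List X} (hu : IsPrefixCode u)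
    (hw : w ≠ []) (hlen : ∀ i, (u i).length < w.length) (hpre : ∀ i, ¬ u i <+: w) :
    IsPrefixCode (Fin.snoc u w : Fin (m + 1) → List X) := by
  have hne : ∀ i, w ≠ u i := fun i h => (hlen i).ne (h ▸ rfl)
  refine ⟨fun i j h => ?_, fun i => ?_, fun i j hij => ?_⟩
  · induction i using Fin.lastCases <;> induction j using Fin.lastCases <;>
      simp only [Fin.snoc_castSucc, Fin.snoc_last] at h
    · rfl
    · exact absurd h (hne _)
    · exact absurd h.symm (hne _)
    · rw [hu.1 h]
  · induction i using Fin.lastCases <;> simp [hw, hu.2.1]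
  · induction i using Fin.lastCases <;> induction j using Fin.lastCases <;>
      simp only [Fin.snoc_castSucc, Fin.snoc_last]
    · exact absurd rfl hij
    · exact fun h => (hlen _).not_ge h.length_le
    · exact hpre _
    · exact hu.2.2 _ _ fun h => hij (h ▸ rfl)

end Decoding

section LetterCode

variable {X : Type*} {M : ℕ}

def letterCode (a : Fin M → X) (w : List X) : Fin (M + 1) → List X :=
  Fin.snoc (fun i => [a i]) w

@[simp] theorem letterCode_castSucc (a : Fin M → X) (w : List X) (i : Fin M) :
    letterCode a w i.castSucc = [a i] := Fin.snoc_castSucc ..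

@[simp] theorem letterCode_last (a : Fin M → X) (w : List X) :
    letterCode a w (Fin.last M) = w := Fin.snoc_last ..

theorem letterCode_injective2 : Function.Injective2 (letterCode (X := X) (M := M)) := by
  intro a a' w w' h
  obtain ⟨h1, h2⟩ := Fin.snoc_injective2 h
  exact ⟨funext fun i => List.singleton_injective (congrFun h1 i), h2⟩

theorem List.takeWhile_append_of_exists_not {p : X → Bool} {w : List X} (hw : ∃ c ∈ w, ¬ p c)
    (R : List X) : (w ++ R).takeWhile p = w.takeWhile p := by
  rw [List.takeWhile_append, if_neg]
  obtain ⟨c, hc, hpc⟩ := hw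
  exact fun hlen => hpc (List.takeWhile_eq_self_iff.1
    ((List.takeWhile_prefix p).eq_of_length hlen) c hc)

open Classical in
/-- The length `τ` of the longest prefix of letters among the `a i` separates the parsings: it
is the same for `w ++ R` and `w`, but grows by one when a single letter is put in front. -/
theorem append_flatten_letterCode_ne {a : Fin M → X} {w : List X}
    (hw : ∃ c ∈ w, c ∉ Set.range a) (j : Fin M) (s t : List (Fin (M + 1))) :
    w ++ (s.map (letterCode a w)).flatten ≠ [a j] ++ (t.map (letterCode a w)).flatten := by
  set v := letterCode a w
  set τ : List X → ℕ := fun l => (l.takeWhile fun c => decide (c ∈ Set.range a)).length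
  have τ_append_left : ∀ R, τ (w ++ R) = τ w := fun R => by
    simp only [τ, List.takeWhile_append_of_exists_not (p := fun c => decide (c ∈ Set.range a))
      (by simpa using hw)]
  have τ_cons : ∀ i R, τ ([a i] ++ R) = τ R + 1 := fun i R => by simp [τ]
  have τ_le : ∀ t : List (Fin (M + 1)),
      (∃ c ∈ (t.map v).flatten, c ∉ Set.range a) → τ w ≤ τ (t.map v).flatten := by
    intro t ht
    induction t with
    | nil => simp at ht
    | cons j t ih =>
      induction j using Fin.lastCases with
      | last => simp [v, τ_append_left]
      | cast j =>
        simp only [List.map_cons, List.flatten_cons, letterCode_castSucc, v, τ_cons] at ht ⊢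
        obtain ⟨c, hc, hca⟩ := ht
        rcases List.mem_append.1 hc with hc | hc
        · exact absurd ⟨j, (List.mem_singleton.1 hc).symm⟩ hca
        · exact (ih ⟨c, hc, hca⟩).trans (Nat.le_succ _)
  intro h
  obtain ⟨c, hc, hca⟩ := hw
  have hct : c ∈ (t.map v).flatten := by
    have : c ∈ [a j] ++ (t.map v).flatten := h ▸ List.mem_append_left _ hc
    rcases List.mem_append.1 this with h' | h'
    · exact absurd ⟨j, (List.mem_singleton.1 h').symm⟩ hca
    · exact h'
  have hτ := congrArg τ h
  rw [τ_append_left, τ_cons] at hτ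
  have := τ_le t ⟨c, hct, hca⟩
  omega

theorem isUDCode_letterCode {a : Fin M → X} {w : List X} (ha : Function.Injective a)
    (hw : ∃ c ∈ w, c ∉ Set.range a) : IsUDCode (letterCode a w) := by
  have hne : ∀ i, letterCode a w i ≠ [] := by
    intro i
    induction i using Fin.lastCases with
    | last => obtain ⟨c, hc, -⟩ := hw; simpa using List.ne_nil_of_mem hc
    | cast i => simp
  refine isUDCode_of_head_eq hne fun i j s t h => ?_
  induction i using Fin.lastCases <;> induction j using Fin.lastCases <;>
    simp only [letterCode_castSucc, letterCode_last] at h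
  · rfl
  · exact absurd h (append_flatten_letterCode_ne hw _ s t)
  · exact absurd h.symm (append_flatten_letterCode_ne hw _ t s)
  · simp only [List.singleton_append, List.cons.injEq] at h
    rw [ha h.1]

end LetterCode

section Counting

variable {α : Type*}

def wordsOver (A : Finset α) (k : ℕ) : Finset (List α) :=
  (Fintype.piFinset fun _ : Fin k => A).map ⟨List.ofFn, List.ofFn_injective⟩

theorem mem_wordsOver {A : Finset α} {k : ℕ} {l : List α} :
    l ∈ wordsOver A k ↔ l.length = k ∧ ∀ c ∈ l, c ∈ A := by
  simp only [wordsOver, Finset.mem_map, Fintype.mem_piFinset, Function.Embedding.coeFn_mk]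
  constructor
  · rintro ⟨f, hf, rfl⟩
    simp only [List.length_ofFn, List.mem_ofFn, true_and]
    rintro c ⟨i, rfl⟩
    exact hf i
  · rintro ⟨rfl, hl⟩
    exact ⟨fun i => l[i], fun i => hl _ (List.getElem_mem _), List.ofFn_getElem⟩

theorem card_wordsOver (A : Finset α) (k : ℕ) : #(wordsOver A k) = #A ^ k := by
  simp [wordsOver]

open scoped Classical

variable {n m : ℕ}

def codes (n : ℕ) (L : Fin m → ℕ) : Finset (Fin m → List (Fin n)) :=
  Fintype.piFinset fun i => wordsOver univ (L i)

theorem mem_codes {L : Fin m → ℕ} {v : Fin m → List (Fin n)} :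
    v ∈ codes n L ↔ ∀ i, (v i).length = L i := by
  simp [codes, mem_wordsOver]

theorem card_codes (L : Fin m → ℕ) : #(codes n L) = ∏ i, n ^ L i := by
  simp [codes, card_wordsOver]

theorem UD_eq_filter (L : Fin m → ℕ) : UD n L = ↑((codes n L).filter IsUDCode) := by
  ext v
  simp [UD, mem_codes]

noncomputable def prefixCodes (n : ℕ) (L : Fin m → ℕ) : Finset (Fin m → List (Fin n)) :=
  (codes n L).filter IsPrefixCode

theorem mem_prefixCodes {L : Fin m → ℕ} {v : Fin m → List (Fin n)} :
    v ∈ prefixCodes n L ↔ (∀ i, (v i).length = L i) ∧ IsPrefixCode v := by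
  rw [prefixCodes, mem_filter, mem_codes]

theorem PR_eq_prefixCodes (L : Fin m → ℕ) : PR n L = ↑(prefixCodes n L) := by
  ext v
  exact mem_prefixCodes.symm

theorem ncard_UD_le (L : Fin m → ℕ) : (UD n L).ncard ≤ ∏ i, n ^ L i := by
  rw [UD_eq_filter, Set.ncard_coe_finset, ← card_codes]
  exact card_filter_le _ _

theorem card_prefixCodes_comp_equiv (L : Fin m → ℕ) (σ : Equiv.Perm (Fin m)) :
    #(prefixCodes n (L ∘ σ)) = #(prefixCodes n L) := by
  refine card_nbij' (· ∘ σ.symm) (· ∘ σ) (fun v hv => ?_) (fun v hv => ?_)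
    (fun v _ => by simp [Function.comp_assoc]) (fun v _ => by simp [Function.comp_assoc])
  · rw [mem_coe, mem_prefixCodes] at hv ⊢
    exact ⟨fun i => by simpa using hv.1 (σ.symm i), by simpa using hv.2.comp_equiv σ.symm⟩
  · rw [mem_coe, mem_prefixCodes] at hv ⊢
    exact ⟨fun i => hv.1 (σ i), hv.2.comp_equiv σ⟩

theorem card_filter_prefix_le (u : List (Fin n)) (k : ℕ) :
    #((wordsOver univ k).filter (u <+: ·)) ≤ n ^ (k - u.length) := by
  calc #((wordsOver univ k).filter (u <+: ·))
      ≤ #((wordsOver univ (k - u.length)).image (u ++ ·)) := by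
        refine card_le_card fun w hw => ?_
        obtain ⟨hwk, ⟨t, rfl⟩⟩ := mem_filter.1 hw
        refine mem_image.2 ⟨t, mem_wordsOver.2 ⟨?_, by simp⟩, rfl⟩
        rw [mem_wordsOver] at hwk
        simp only [List.length_append] at hwk
        omega
    _ ≤ n ^ (k - u.length) := card_image_le.trans (by simp [card_wordsOver])

theorem card_sub_le_card_filter_not_prefix (u : Fin m → List (Fin n)) (ℓ : ℕ) :
    n ^ ℓ - ∑ i, n ^ (ℓ - (u i).length) ≤
      #((wordsOver univ ℓ).filter fun w => ∀ i, ¬ u i <+: w) := by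
  set good := (wordsOver univ ℓ).filter fun w => ∀ i, ¬ u i <+: w
  have hbad : wordsOver univ ℓ \ good ⊆
      univ.biUnion fun i => (wordsOver univ ℓ).filter (u i <+: ·) := by
    intro w hw
    rw [Finset.mem_sdiff, Finset.mem_filter] at hw
    simp only [not_and, not_forall, not_not] at hw
    obtain ⟨i, hi⟩ := hw.2 hw.1
    exact mem_biUnion.2 ⟨i, mem_univ _, mem_filter.2 ⟨hw.1, hi⟩⟩
  calc n ^ ℓ - ∑ i, n ^ (ℓ - (u i).length)
      ≤ #(wordsOver (univ : Finset (Fin n)) ℓ) - #(wordsOver univ ℓ \ good) := by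
        rw [card_wordsOver, Finset.card_univ, Fintype.card_fin]
        refine Nat.sub_le_sub_left ((card_le_card hbad).trans (card_biUnion_le.trans ?_)) _
        exact sum_le_sum fun i _ => card_filter_prefix_le (u i) ℓ
    _ ≤ #good := by
        have := card_le_card_sdiff_add_card (s := wordsOver univ ℓ) (t := good)
        omega

/-- Every word of length `ℓ` having none of the `u i` as a prefix extends the prefix code `u`. -/
theorem card_prefixCodes_mul_le_card_snoc (L : Fin m → ℕ) {ℓ : ℕ} (hℓ : 0 < ℓ)
    (hL : ∀ i, L i < ℓ) :
    #(prefixCodes n L) * (n ^ ℓ - ∑ i, n ^ (ℓ - L i)) ≤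
      #(prefixCodes n (Fin.snoc L ℓ : Fin (m + 1) → ℕ)) := by
  set good : (Fin m → List (Fin n)) → Finset (List (Fin n)) := fun u =>
    (wordsOver univ ℓ).filter fun w => ∀ i, ¬ u i <+: w
  have card_good : ∀ u ∈ prefixCodes n L, n ^ ℓ - ∑ i, n ^ (ℓ - L i) ≤ #(good u) := by
    intro u hu
    simpa only [(mem_prefixCodes.1 hu).1] using card_sub_le_card_filter_not_prefix u ℓ
  calc #(prefixCodes n L) * (n ^ ℓ - ∑ i, n ^ (ℓ - L i))
      ≤ ∑ u ∈ prefixCodes n L, #(good u) := by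
        rw [← smul_eq_mul, ← sum_const]
        exact sum_le_sum card_good
    _ = #((prefixCodes n L).sigma good) := (card_sigma _ _).symm
    _ ≤ #(prefixCodes n (Fin.snoc L ℓ : Fin (m + 1) → ℕ)) := by
        refine card_le_card_of_injOn (fun p => (Fin.snoc p.1 p.2 : Fin (m + 1) → List (Fin n)))
          (fun p hp => ?_) fun p _ q _ h => ?_
        · simp only [coe_sigma, Set.mem_sigma_iff, mem_coe, mem_prefixCodes, good, mem_filter,
            mem_wordsOver] at hp ⊢
          obtain ⟨⟨hlen, hu⟩, ⟨hw, -⟩, hpre⟩ := hp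
          refine ⟨fun i => ?_, hu.snoc (List.ne_nil_of_length_pos (hw ▸ hℓ))
            (fun i => hw ▸ hlen i ▸ hL i) hpre⟩
          induction i using Fin.lastCases <;> simp [hw, hlen]
        · obtain ⟨h1, h2⟩ := Fin.snoc_injective2 h
          exact Sigma.ext h1 (heq_of_eq h2)

end Counting

section Greedy

/-- With `x = 1/n`, a lower bound for the fraction of words of a given length that avoid, as
prefixes, `i` shorter words of pairwise distinct lengths: the `j`-th shortest forbids at most a
fraction `x ^ (j + 1)`. -/
def freeFraction (x : ℝ) (i : ℕ) : ℝ := 1 - ∑ j ∈ range i, x ^ (j + 1)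

theorem sum_pow_succ_mul_one_sub_le {x : ℝ} (hx : 0 ≤ x) (i : ℕ) :
    (∑ j ∈ range i, x ^ (j + 1)) * (1 - x) ≤ x := by
  have : (∑ j ∈ range i, x ^ (j + 1)) * (1 - x) = x * (1 - x ^ i) := by
    simp_rw [pow_succ', ← mul_sum, mul_assoc, geom_sum_mul_neg]
  rw [this]
  nlinarith [pow_nonneg hx i]

theorem freeFraction_nonneg {x : ℝ} (hx : 0 ≤ x) (hx2 : x ≤ 2⁻¹) (i : ℕ) :
    0 ≤ freeFraction x i := by
  have := sum_pow_succ_mul_one_sub_le hx i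
  have : 0 ≤ ∑ j ∈ range i, x ^ (j + 1) := sum_nonneg fun j _ => pow_nonneg hx _
  rw [freeFraction]
  nlinarith

theorem Fin.val_lt_of_strictMono {m : ℕ} {b : Fin m → ℕ} (hb : StrictMono b)
    (hb0 : ∀ i, 0 < b i) (i : Fin m) : (i : ℕ) < b i := by
  have := card_le_card_of_injOn b (s := Iic i) (t := Icc 1 (b i))
    (fun j hj => mem_Icc.2 ⟨hb0 j, hb.monotone (mem_Iic.1 hj)⟩) hb.injective.injOn
  simp only [Fin.card_Iic, Nat.card_Icc] at this
  omega

theorem pow_mul_freeFraction_le {n m ℓ : ℕ} (hn : 0 < n) {b : Fin m → ℕ}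
    (hb : ∀ i : Fin m, (i : ℕ) < b i) (hbℓ : ∀ i, b i < ℓ) :
    (n : ℝ) ^ ℓ * freeFraction (n : ℝ)⁻¹ m ≤ (n ^ ℓ - ∑ i, n ^ (ℓ - b i) : ℕ) := by
  calc (n : ℝ) ^ ℓ * freeFraction (n : ℝ)⁻¹ m
      = n ^ ℓ - ∑ i : Fin m, (n : ℝ) ^ ℓ * (n : ℝ)⁻¹ ^ ((i : ℕ) + 1) := by
        rw [freeFraction, mul_sub, mul_one, mul_sum,
          Fin.sum_univ_eq_sum_range (fun i => (n : ℝ) ^ ℓ * (n : ℝ)⁻¹ ^ (i + 1))]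
    _ ≤ n ^ ℓ - ∑ i, ((n ^ (ℓ - b i) : ℕ) : ℝ) := by
        gcongr with i
        have := hb i
        have := hbℓ i
        rw [Nat.cast_pow, inv_pow, ← pow_sub₀ _ (by positivity) (by omega)]
        exact pow_le_pow_right₀ (by exact_mod_cast hn) (by omega)
    _ ≤ (n ^ ℓ - ∑ i, n ^ (ℓ - b i) : ℕ) := by
        have := (Nat.cast_le (α := ℝ)).2 (le_tsub_add (a := ∑ i, n ^ (ℓ - b i)) (b := n ^ ℓ))
        push_cast at this ⊢
        linarith

theorem prod_pow_mul_prod_freeFraction_le {n : ℕ} (hn : 2 ≤ n) {m : ℕ} {b : Fin m → ℕ}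
    (hb : StrictMono b) (hb0 : ∀ i, 0 < b i) :
    (∏ i, (n : ℝ) ^ b i) * ∏ i ∈ range m, freeFraction (n : ℝ)⁻¹ i ≤ #(prefixCodes n b) := by
  set x : ℝ := (n : ℝ)⁻¹
  have hfree : ∀ i, 0 ≤ freeFraction x i :=
    freeFraction_nonneg (by positivity) (inv_anti₀ two_pos (by exact_mod_cast hn))
  induction m with
  | zero =>
    simp only [univ_eq_empty, prod_empty, range_zero, mul_one, Nat.one_le_cast]
    exact card_pos.2 ⟨default, mem_prefixCodes.2 ⟨fun i => i.elim0,
      fun i => i.elim0, fun i => i.elim0, fun i => i.elim0⟩⟩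
  | succ m ih =>
    obtain ⟨b, ℓ, rfl⟩ : ∃ b' ℓ, (Fin.snoc b' ℓ : Fin (m + 1) → ℕ) = b :=
      ⟨Fin.init b, b (Fin.last m), Fin.snoc_init_self b⟩
    have hb' : StrictMono b := fun i j hij => by
      simpa using hb (Fin.castSucc_lt_castSucc_iff.2 hij)
    have hb0' : ∀ i, 0 < b i := fun i => by simpa using hb0 i.castSucc
    have hbℓ : ∀ i, b i < ℓ := fun i => by simpa using hb (Fin.castSucc_lt_last i)
    have hℓ : 0 < ℓ := by simpa using hb0 (Fin.last m)
    calc (∏ i, (n : ℝ) ^ (Fin.snoc b ℓ : Fin (m + 1) → ℕ) i) *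
          ∏ i ∈ range (m + 1), freeFraction x i
        = ((∏ i, (n : ℝ) ^ b i) * ∏ i ∈ range m, freeFraction x i) *
            ((n : ℝ) ^ ℓ * freeFraction x m) := by
          simp only [Fin.prod_univ_castSucc, Fin.snoc_castSucc, Fin.snoc_last, prod_range_succ]
          ring
      _ ≤ #(prefixCodes n b) * (n ^ ℓ - ∑ i, n ^ (ℓ - b i) : ℕ) :=
          mul_le_mul (ih hb' hb0')
            (pow_mul_freeFraction_le (by omega) (Fin.val_lt_of_strictMono hb' hb0') hbℓ)
            (mul_nonneg (by positivity) (hfree m)) (Nat.cast_nonneg _)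
      _ ≤ #(prefixCodes n (Fin.snoc b ℓ : Fin (m + 1) → ℕ)) := by
          exact_mod_cast card_prefixCodes_mul_le_card_snoc b hℓ hbℓ

end Greedy

section LowerBound

theorem prod_freeFraction_le_rho {n m : ℕ} (hn : 2 ≤ n) {L : Fin m → ℕ} (hL : ∀ i, 1 ≤ L i)
    (hinj : Function.Injective L) (hUD : (UD n L).Nonempty) :
    ∏ i ∈ range m, freeFraction (n : ℝ)⁻¹ i ≤ rho n L := by
  set σ := Tuple.sort L
  have hb : StrictMono (L ∘ σ) :=
    (Tuple.monotone_sort L).strictMono_of_injective (hinj.comp σ.injective)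
  have hgreedy := prod_pow_mul_prod_freeFraction_le hn hb fun i => hL (σ i)
  have hUD_pos : (0 : ℝ) < (UD n L).ncard := by
    rw [UD_eq_filter] at hUD ⊢
    exact_mod_cast Set.ncard_pos (Finset.finite_toSet _) |>.2 hUD
  have hUD_le : ((UD n L).ncard : ℝ) ≤ ∏ i, (n : ℝ) ^ (L ∘ σ) i := by
    rw [Function.comp_def, Equiv.prod_comp σ fun i => (n : ℝ) ^ L i]
    exact_mod_cast ncard_UD_le L
  have hprod : 0 ≤ ∏ i ∈ range m, freeFraction (n : ℝ)⁻¹ i := prod_nonneg fun i _ =>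
    freeFraction_nonneg (by positivity) (inv_anti₀ two_pos (by exact_mod_cast hn)) i
  rw [rho, PR_eq_prefixCodes, Set.ncard_coe_finset, ← card_prefixCodes_comp_equiv L σ,
    le_div_iff₀ hUD_pos]
  calc (∏ i ∈ range m, freeFraction (n : ℝ)⁻¹ i) * (UD n L).ncard
      ≤ (∏ i ∈ range m, freeFraction (n : ℝ)⁻¹ i) * ∏ i, (n : ℝ) ^ (L ∘ σ) i :=
        mul_le_mul_of_nonneg_left hUD_le hprod
    _ ≤ #(prefixCodes n (L ∘ σ)) := by rwa [mul_comm]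

theorem one_sub_mul_add_pow_three_le_prod_freeFraction {x : ℝ} (hx : 0 ≤ x) {M : ℕ}
    (hM : 2 ≤ M) (hMx : (M + 1) * x ≤ 1) :
    1 - M * x + x ^ 3 ≤ ∏ i ∈ range (M + 1), freeFraction x i := by
  induction M, hM using Nat.le_induction with
  | base =>
    refine le_of_eq ?_
    simp only [prod_range_succ, sum_range_succ, freeFraction, range_zero, prod_empty,
      sum_empty]
    ring
  | succ M hM ih =>
    push_cast at hMx
    have hx1 : x ≤ 1 := by nlinarith
    have hP := ih (by nlinarith)
    set s := ∑ j ∈ range (M + 1), x ^ (j + 1)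
    have hs := sum_pow_succ_mul_one_sub_le hx (M + 1)
    have hs0 : 0 ≤ s := sum_nonneg fun j _ => pow_nonneg hx _
    have hβ : 1 - M * x + x ^ 3 ≤ 1 - x := by
      have : x ^ 3 ≤ x := pow_le_of_le_one hx hx1 (by norm_num)
      have : (2 : ℝ) ≤ M := by exact_mod_cast hM
      nlinarith
    have hs1 : s ≤ 1 := by nlinarith
    rw [prod_range_succ]
    calc 1 - ((M + 1 : ℕ) : ℝ) * x + x ^ 3
        ≤ (1 - M * x + x ^ 3) * (1 - s) := by push_cast; nlinarith
      _ ≤ (∏ i ∈ range (M + 1), freeFraction x i) * freeFraction x (M + 1) :=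
          mul_le_mul_of_nonneg_right hP (by show 0 ≤ 1 - s; linarith)

theorem le_xiStar {n M : ℕ} (hM : 2 ≤ M) (hMn : M + 1 ≤ n) :
    1 - M / n + 1 / n ^ 3 ≤ xiStar n (M + 1) := by
  have hn : 2 ≤ n := by omega
  have hn0 : (0 : ℝ) < n := by positivity
  have hbound := one_sub_mul_add_pow_three_le_prod_freeFraction (x := (n : ℝ)⁻¹)
    (by positivity) hM (by rw [← div_eq_mul_inv, div_le_one hn0]; exact_mod_cast hMn)
  have hbound' : 1 - M / n + 1 / n ^ 3 ≤ ∏ i ∈ range (M + 1), freeFraction (n : ℝ)⁻¹ i := by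
    simpa [div_eq_mul_inv] using hbound
  have hpos : 0 < ∏ i ∈ range (M + 1), freeFraction (n : ℝ)⁻¹ i := by
    refine lt_of_lt_of_le ?_ hbound'
    have hr : (M : ℝ) / n < 1 := (div_lt_one hn0).2 (by exact_mod_cast hMn)
    positivity
  set L : Fin (M + 1) → ℕ := fun i => i + 1
  have hL : StrictMono L := fun i j hij => Nat.succ_lt_succ hij
  have hUD : (UD n L).Nonempty := by
    have := prod_pow_mul_prod_freeFraction_le hn hL fun i => Nat.succ_pos i
    obtain ⟨v, hv⟩ := card_pos.1 (Nat.cast_pos.1 (lt_of_lt_of_le (by positivity) this))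
    rw [mem_prefixCodes] at hv
    exact ⟨v, hv.1, hv.2.isUDCode⟩
  refine le_csInf ⟨_, L, fun i => Nat.succ_pos i, hL.injective, hUD, rfl⟩ ?_
  rintro r ⟨L, hL, hinj, hUD, rfl⟩
  exact hbound'.trans (prod_freeFraction_le_rho hn hL hinj hUD)

end LowerBound

section UpperBound

open scoped Classical

variable {n M : ℕ}

theorem card_embedding_pos (hMn : M ≤ n) : 0 < Fintype.card (Fin M ↪ Fin n) :=
  Fintype.card_pos_iff.2 (Function.Embedding.nonempty_of_card_le (by simpa using hMn))

def letterLengths (M k : ℕ) : Fin (M + 1) → ℕ := Fin.snoc (fun _ => 1) k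

theorem letterCode_mem_codes (a : Fin M → Fin n) {w : List (Fin n)} {k : ℕ}
    (hw : w.length = k) : letterCode a w ∈ codes n (letterLengths M k) := by
  rw [mem_codes]
  intro i
  induction i using Fin.lastCases <;> simp [letterLengths, hw]

theorem card_mul_le_ncard_UD_letterLengths (k : ℕ) :
    Fintype.card (Fin M ↪ Fin n) * (n ^ k - M ^ k) ≤ (UD n (letterLengths M k)).ncard := by
  set good : (Fin M ↪ Fin n) → Finset (List (Fin n)) := fun a =>
    (wordsOver univ k).filter fun w => ∃ c ∈ w, c ∉ Set.range a
  have card_good : ∀ a, #(good a) = n ^ k - M ^ k := by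
    intro a
    have : good a = wordsOver univ k \ wordsOver (univ.map a) k := by
      ext w
      simp only [good, mem_filter, Finset.mem_sdiff, mem_wordsOver, Finset.mem_map, mem_univ,
        implies_true, and_true, true_and, Set.mem_range, not_and, not_forall]
      tauto
    rw [this, card_sdiff_of_subset fun w hw => ?_]
    · simp [card_wordsOver]
    · rw [mem_wordsOver] at hw ⊢
      exact ⟨hw.1, fun _ _ => mem_univ _⟩
  rw [UD_eq_filter, Set.ncard_coe_finset]
  calc Fintype.card (Fin M ↪ Fin n) * (n ^ k - M ^ k)
      = #(univ.sigma good) := by simp [card_good]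
    _ ≤ _ := by
      refine card_le_card_of_injOn (fun p => letterCode p.1 p.2) (fun p hp => ?_)
        fun p _ q _ h => ?_
      · simp only [coe_sigma, Set.mem_sigma_iff, mem_coe, good, mem_filter, mem_wordsOver] at hp ⊢
        exact ⟨letterCode_mem_codes _ hp.2.1.1, isUDCode_letterCode p.1.injective hp.2.2⟩
      · obtain ⟨h1, h2⟩ := letterCode_injective2 h
        exact Sigma.ext (DFunLike.coe_injective h1) (heq_of_eq h2)

theorem ncard_PR_letterLengths_le {k : ℕ} (hk : 1 ≤ k) :
    (PR n (letterLengths M k)).ncard ≤ Fintype.card (Fin M ↪ Fin n) * ((n - M) * n ^ (k - 1)) := by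
  set T := univ.sigma fun a : Fin M ↪ Fin n =>
    (univ.map a)ᶜ ×ˢ wordsOver (univ : Finset (Fin n)) (k - 1)
  rw [PR_eq_prefixCodes, Set.ncard_coe_finset]
  calc #(prefixCodes n (letterLengths M k))
      ≤ #(T.image fun p => letterCode p.1 (p.2.1 :: p.2.2)) := by
        refine card_le_card fun v hv => ?_
        obtain ⟨hlen, hv⟩ := mem_prefixCodes.1 hv
        have : ∀ i : Fin M, ∃ c, v i.castSucc = [c] := fun i =>
          List.length_eq_one_iff.1 (by simpa [letterLengths] using hlen i.castSucc)
        choose a ha using this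
        have ha_inj : Function.Injective a := fun i j h =>
          Fin.castSucc_injective _ (hv.1 (by rw [ha, ha, h]))
        have hlast : (v (Fin.last M)).length = k := by simpa [letterLengths] using hlen (Fin.last M)
        obtain ⟨c, t, hct⟩ := List.exists_cons_of_length_pos (hlast ▸ hk)
        refine mem_image.2 ⟨⟨⟨a, ha_inj⟩, c, t⟩, ?_, ?_⟩
        · simp only [T, mem_sigma, mem_univ, mem_product, mem_compl, Finset.mem_map,
            Function.Embedding.coeFn_mk, true_and, not_exists, mem_wordsOver]
          refine ⟨fun i hi => hv.2.2 i.castSucc (Fin.last M) (Fin.castSucc_lt_last i).ne ?_,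
            by simp [← hlast, hct]⟩
          rw [ha, hct, hi]
          exact ⟨t, rfl⟩
        · funext i
          induction i using Fin.lastCases <;> simp [ha, hct]
    _ ≤ #T := card_image_le
    _ = Fintype.card (Fin M ↪ Fin n) * ((n - M) * n ^ (k - 1)) := by
        simp [T, card_compl, card_wordsOver]

theorem rho_letterLengths_le (hMn : M < n) {k : ℕ} (hk : 1 ≤ k) :
    rho n (letterLengths M k) ≤ (1 - M / n) / (1 - ((M : ℝ) / n) ^ k) := by
  obtain ⟨k, rfl⟩ : ∃ k', k = k' + 1 := ⟨k - 1, by omega⟩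
  have hN : (0 : ℝ) < Fintype.card (Fin M ↪ Fin n) := by exact_mod_cast card_embedding_pos hMn.le
  have hn0 : (0 : ℝ) < n := by exact_mod_cast (by omega : 0 < n)
  have hr : (M : ℝ) / n < 1 := (div_lt_one hn0).2 (by exact_mod_cast hMn)
  set D : ℝ := Fintype.card (Fin M ↪ Fin n) * n ^ (k + 1)
  have hD : 0 < D := by positivity
  have hPR : ((PR n (letterLengths M (k + 1))).ncard : ℝ) ≤ D * (1 - M / n) := by
    have := ncard_PR_letterLengths_le (n := n) (M := M) (Nat.succ_pos k)
    rw [← Nat.cast_le (α := ℝ)] at this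
    refine this.trans_eq ?_
    push_cast [Nat.cast_sub hMn.le]
    field_simp
    ring
  have hUD : D * (1 - ((M : ℝ) / n) ^ (k + 1)) ≤ (UD n (letterLengths M (k + 1))).ncard := by
    have := card_mul_le_ncard_UD_letterLengths (n := n) (M := M) (k + 1)
    rw [← Nat.cast_le (α := ℝ)] at this
    refine le_of_eq_of_le ?_ this
    push_cast [Nat.cast_sub (Nat.pow_le_pow_left hMn.le _)]
    simp only [D, div_pow]
    field_simp
  have hUD0 : 0 < D * (1 - ((M : ℝ) / n) ^ (k + 1)) :=
    mul_pos hD (sub_pos.2 (pow_lt_one₀ (by positivity) hr (Nat.succ_ne_zero k)))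
  calc rho n (letterLengths M (k + 1))
      ≤ D * (1 - M / n) / (D * (1 - ((M : ℝ) / n) ^ (k + 1))) :=
        div_le_div₀ (mul_nonneg hD.le (by linarith)) hPR hUD0 hUD
    _ = (1 - M / n) / (1 - ((M : ℝ) / n) ^ (k + 1)) := mul_div_mul_left _ _ hD.ne'

theorem xi_lt (hMn : M < n) {β : ℝ} (hβ : 1 - M / n < β) : xi n (M + 1) < β := by
  have hn0 : (0 : ℝ) < n := by exact_mod_cast (by omega : 0 < n)
  have hr : (M : ℝ) / n < 1 := (div_lt_one hn0).2 (by exact_mod_cast hMn)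
  have hlim : Tendsto (fun k : ℕ => (1 - (M : ℝ) / n) / (1 - ((M : ℝ) / n) ^ k)) atTop
      (𝓝 ((1 - (M : ℝ) / n) / (1 - 0))) :=
    tendsto_const_nhds.div (tendsto_const_nhds.sub
      (tendsto_pow_atTop_nhds_zero_of_lt_one (by positivity) hr)) (by norm_num)
  rw [sub_zero, div_one] at hlim
  obtain ⟨k, hk, hk1⟩ := ((hlim.eventually (gt_mem_nhds hβ)).and (eventually_ge_atTop 1)).exists
  have hUD : (UD n (letterLengths M k)).Nonempty := by
    refine Set.nonempty_of_ncard_ne_zero (Nat.pos_iff_ne_zero.1 ?_)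
    refine lt_of_lt_of_le (Nat.mul_pos ?_ ?_) (card_mul_le_ncard_UD_letterLengths k)
    · exact card_embedding_pos hMn.le
    · exact Nat.sub_pos_of_lt (Nat.pow_lt_pow_left hMn (by omega))
  have hL : ∀ i, 1 ≤ letterLengths M k i := fun i => by
    induction i using Fin.lastCases <;> simp [letterLengths, hk1]
  have hbdd : BddBelow {r : ℝ | ∃ L : Fin (M + 1) → ℕ,
      (∀ i, 1 ≤ L i) ∧ (UD n L).Nonempty ∧ r = rho n L} :=
    ⟨0, by rintro r ⟨L, -, -, rfl⟩; exact div_nonneg (Nat.cast_nonneg _) (Nat.cast_nonneg _)⟩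
  calc xi n (M + 1) ≤ rho n (letterLengths M k) := csInf_le hbdd ⟨_, hL, hUD, rfl⟩
    _ ≤ _ := rho_letterLengths_le hMn hk1
    _ < β := hk

end UpperBound

/-- Corollary 3: if `n ≥ m ≥ 3` then `ξ*_{n,m} > ξ_{n,m}`. -/
theorem stmt11 (n m : ℕ) (hm : 3 ≤ m) (hn : m ≤ n) : xi n m < xiStar n m := by
  obtain ⟨M, rfl⟩ : ∃ M, m = M + 1 := ⟨m - 1, by omega⟩
  refine xi_lt (by omega) (lt_of_lt_of_le ?_ (le_xiStar (by omega) hn))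
  have hn0 : (0 : ℝ) < n := by exact_mod_cast (by omega : 0 < n)
  simp only [lt_add_iff_pos_right]
  positivity
end

section
/- For all integers n ≥ 2 and m ≥ 3, the strict inequality ϖ_{n,m} > 1 − (m−1)/n holds, where ϖ_{n,m} := ∏_{i=1}^{m−1} (1 − (1 − n^{−i})/(n−1)). -/
/-!
Every factor `1 - (1 - n⁻ⁱ)/(n - 1)` of `ϖ_{n,m}` exceeds `1 - 1/(n - 1)`, and the first one
is exactly `1 - 1/n`. With `k = m - 1`, Bernoulli's inequality gives
`ϖ_{n,m} > (1 - 1/n) (1 - 1/(n - 1))^(k-1) ≥ (1 - 1/n) (1 - (k - 1)/(n - 1)) = 1 - k/n`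
when `k < n`; when `k ≥ n` the right-hand side is not positive while `ϖ_{n,m}` is.
-/

open Finset Filter Topology

noncomputable def varpiFactor (n i : ℕ) : ℝ :=
  1 - (1 - 1 / (n : ℝ) ^ i) / ((n : ℝ) - 1)

lemma varpi_eq_prod_varpiFactor (n m : ℕ) :
    varpi n m = ∏ i ∈ Icc 1 (m - 1), varpiFactor n i := rfl

lemma varpiFactor_one {n : ℕ} (hn : 1 < n) : varpiFactor n 1 = 1 - 1 / (n : ℝ) := by
  have : (n : ℝ) - 1 ≠ 0 := by
    have : (1 : ℝ) < n := by exact_mod_cast hn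
    linarith
  rw [varpiFactor, pow_one]
  field_simp

lemma one_sub_inv_lt_varpiFactor {n : ℕ} (hn : 1 < n) (i : ℕ) :
    1 - 1 / ((n : ℝ) - 1) < varpiFactor n i := by
  have : (0 : ℝ) < n - 1 := by
    have : (1 : ℝ) < n := by exact_mod_cast hn
    linarith
  have : (0 : ℝ) < 1 / (n : ℝ) ^ i := by positivity
  rw [varpiFactor, sub_lt_sub_iff_left]
  gcongr
  linarith

lemma varpiFactor_pos {n : ℕ} (hn : 1 < n) (i : ℕ) : 0 < varpiFactor n i := by
  refine lt_of_le_of_lt ?_ (one_sub_inv_lt_varpiFactor hn i)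
  have : (1 : ℝ) ≤ n - 1 := by
    have : (2 : ℝ) ≤ n := by exact_mod_cast hn
    linarith
  rw [sub_nonneg, div_le_one (by linarith)]
  exact this

lemma one_sub_div_le_one_sub_inv_pow {x : ℝ} (hx : 1 / 2 ≤ x) (j : ℕ) :
    1 - j / x ≤ (1 - 1 / x) ^ j := by
  have : 1 / x ≤ 2 := by
    rw [div_le_iff₀ (by linarith)]
    linarith
  have := one_add_mul_le_pow (a := -(1 / x)) (by linarith) j
  rwa [← sub_eq_add_neg, mul_neg, mul_one_div, ← sub_eq_add_neg] at this

lemma one_sub_inv_pow_lt_prod_Ioc_varpiFactor {n j : ℕ} (hn : 2 < n) (hj : 1 ≤ j) :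
    (1 - 1 / ((n : ℝ) - 1)) ^ j < ∏ i ∈ Ioc 1 (j + 1), varpiFactor n i := by
  have hr : 0 < 1 - 1 / ((n : ℝ) - 1) := by
    have : (2 : ℝ) < n := by exact_mod_cast hn
    rw [sub_pos, div_lt_one (by linarith)]
    linarith
  have hconst : ∏ _i ∈ Ioc 1 (j + 1), (1 - 1 / ((n : ℝ) - 1)) = (1 - 1 / ((n : ℝ) - 1)) ^ j := by
    simp
  rw [← hconst]
  exact prod_lt_prod_of_nonempty (fun _ _ => hr)
    (fun i _ => one_sub_inv_lt_varpiFactor (by omega) i) (nonempty_Ioc.mpr (by omega))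

theorem one_sub_div_lt_prod_varpiFactor {n k : ℕ} (hn : 1 < n) (hk : 2 ≤ k) :
    1 - (k : ℝ) / n < ∏ i ∈ Icc 1 k, varpiFactor n i := by
  rcases le_or_gt n k with hnk | hkn
  · have : (1 : ℝ) ≤ k / n := by
      rw [one_le_div (by positivity)]
      exact_mod_cast hnk
    linarith [prod_pos fun i (_ : i ∈ Icc 1 k) => varpiFactor_pos hn i]
  obtain ⟨j, rfl⟩ : ∃ j, k = j + 1 := ⟨k - 1, by omega⟩
  have hn2 : (2 : ℝ) < n := by exact_mod_cast (by omega : 2 < n)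
  have hfirst : 0 < 1 - 1 / (n : ℝ) := varpiFactor_one hn ▸ varpiFactor_pos hn 1
  rw [← mul_prod_Ioc_eq_prod_Icc (by omega), varpiFactor_one hn]
  calc 1 - ((j + 1 : ℕ) : ℝ) / n = (1 - 1 / n) * (1 - (j : ℝ) / (n - 1)) := by
        have : (n : ℝ) - 1 ≠ 0 := by linarith
        push_cast
        field_simp
        ring
    _ ≤ (1 - 1 / n) * (1 - 1 / ((n : ℝ) - 1)) ^ j := by
        gcongr
        exact one_sub_div_le_one_sub_inv_pow (by linarith) j
    _ < _ := by
        gcongr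
        exact one_sub_inv_pow_lt_prod_Ioc_varpiFactor (by omega) (by omega)

/-- The inequality `ϖ_{n,m} > 1 - (m-1)/n` for `n ≥ 2`, `m ≥ 3`. -/
theorem stmt12 (n m : ℕ) (hn : 2 ≤ n) (hm : 3 ≤ m) :
    1 - ((m : ℝ) - 1) / (n : ℝ) < varpi n m := by
  have hcast : ((m - 1 : ℕ) : ℝ) = (m : ℝ) - 1 := by
    rw [Nat.cast_sub (by omega), Nat.cast_one]
  rw [varpi_eq_prod_varpiFactor, ← hcast]
  exact one_sub_div_lt_prod_varpiFactor hn (by omega)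
end

section
/- Let m ≥ 1 and n ≥ 2 be integers and let L = (a_1,…,a_s) be a finite sequence of positive integers with s ≤ m such that the Kraft sum σ_n(L) = Σ_{i=1}^s n^{−a_i} is strictly less than 1. Then σ_n(L) ≤ 1 − ς_{n,m}. -/
open Finset Filter Topology

/-! Induct on the number of words, adding a longest word last; the key identity is
`ς_{n,m+1} = ς_{n,m} - n^{-(⌊m/(n-1)⌋+1)}`. If the new length `a` exceeds `⌊m/(n-1)⌋`, its
weight `n^{-a}` is at most this decrement of `ς`, so the bound propagates. Otherwise all lengths
are at most `a`, so the Kraft sum is a multiple of `n^{-a}` below `1`; hence it is at most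
`1 - n^{-a} ≤ 1 - n^{-⌊(m+1)/(n-1)⌋} ≤ 1 - ς_{n,m+1}`. -/

variable {n : ℕ}

lemma varsigma_succ (hn : 2 ≤ n) (m : ℕ) :
    varsigma n (m + 1) = varsigma n m - 1 / (n : ℝ) ^ (m / (n - 1) + 1) := by
  have hk : 0 < n - 1 := by omega
  have hnr : (n : ℝ) ≠ 0 := by positivity
  have hdivmod {q r : ℕ} (hr : r < n - 1) :
      ((n - 1) * q + r) / (n - 1) = q ∧ ((n - 1) * q + r) % (n - 1) = r :=
    (Nat.div_mod_unique hk).2 ⟨add_comm _ _, hr⟩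
  obtain ⟨q, r, hr, rfl⟩ : ∃ q r, r < n - 1 ∧ m = (n - 1) * q + r :=
    ⟨m / (n - 1), m % (n - 1), Nat.mod_lt _ hk, (Nat.div_add_mod _ _).symm⟩
  unfold varsigma
  rw [(hdivmod hr).1, (hdivmod hr).2]
  rcases Nat.lt_or_ge (r + 1) (n - 1) with hlt | hge
  · rw [add_assoc, (hdivmod hlt).1, (hdivmod hlt).2]
    push_cast
    ring
  · have hsucc : (n - 1) * q + r + 1 = (n - 1) * (q + 1) + 0 := by rw [Nat.mul_succ]; omega
    rw [hsucc, (hdivmod hk).1, (hdivmod hk).2, show r = n - 2 by omega, Nat.cast_sub hn]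
    field_simp
    ring

lemma varsigma_antitone (hn : 2 ≤ n) : Antitone (varsigma n) :=
  antitone_nat_of_succ_le fun m => by
    rw [varsigma_succ hn]
    have : (0 : ℝ) ≤ 1 / (n : ℝ) ^ (m / (n - 1) + 1) := by positivity
    linarith

lemma varsigma_le_one_div_pow (hn : n ≠ 0) (m : ℕ) :
    varsigma n m ≤ 1 / (n : ℝ) ^ (m / (n - 1)) := by
  have hnr : (0 : ℝ) < n := by positivity
  calc varsigma n m ≤ n / (n : ℝ) ^ (m / (n - 1) + 1) := by
        unfold varsigma; gcongr; simp
    _ = 1 / (n : ℝ) ^ (m / (n - 1)) := by field_simp; ring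

lemma kraft_sum_le_one_sub_one_div_pow (hn : n ≠ 0) {ι : Type*} (S : Finset ι) (L : ι → ℕ)
    {a : ℕ} (ha : ∀ i ∈ S, L i ≤ a) (h : ∑ i ∈ S, 1 / (n : ℝ) ^ L i < 1) :
    ∑ i ∈ S, 1 / (n : ℝ) ^ L i ≤ 1 - 1 / (n : ℝ) ^ a := by
  set σ := ∑ i ∈ S, 1 / (n : ℝ) ^ L i
  have hna : (0 : ℝ) < (n : ℝ) ^ a := by positivity
  have hscale : (n : ℝ) ^ a * σ = ((∑ i ∈ S, n ^ (a - L i) : ℕ) : ℝ) := by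
    rw [mul_sum]
    push_cast
    refine sum_congr rfl fun i hi => ?_
    rw [← pow_sub_mul_pow (n : ℝ) (ha i hi)]
    field_simp
  have hint : ∑ i ∈ S, n ^ (a - L i) + 1 ≤ n ^ a := by
    have : (n : ℝ) ^ a * σ < (n : ℝ) ^ a := by nlinarith
    exact_mod_cast hscale ▸ this
  have hle : (n : ℝ) ^ a * σ ≤ (n : ℝ) ^ a - 1 := by
    rw [hscale, le_sub_iff_add_le]
    exact_mod_cast hint
  calc σ = (n : ℝ) ^ a * σ / (n : ℝ) ^ a := by field_simp
    _ ≤ ((n : ℝ) ^ a - 1) / (n : ℝ) ^ a := by gcongr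
    _ = 1 - 1 / (n : ℝ) ^ a := by field_simp

theorem kraft_sum_le_one_sub_varsigma (hn : 2 ≤ n) {ι : Type*} [DecidableEq ι] (S : Finset ι)
    (L : ι → ℕ) (h : ∑ i ∈ S, 1 / (n : ℝ) ^ L i < 1) :
    ∑ i ∈ S, 1 / (n : ℝ) ^ L i ≤ 1 - varsigma n #S := by
  induction S using Finset.induction_on_max_value L with
  | empty => simp [varsigma, show (n : ℝ) ≠ 0 by positivity]
  | insert a S haS hmax ih =>
    rw [card_insert_of_notMem haS]
    by_cases hlong : #S / (n - 1) < L a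
    · rw [sum_insert haS] at h ⊢
      have hS := ih (lt_of_le_of_lt (le_add_of_nonneg_left (by positivity)) h)
      have ha : 1 / (n : ℝ) ^ L a ≤ 1 / (n : ℝ) ^ (#S / (n - 1) + 1) :=
        one_div_pow_le_one_div_pow_of_le (by norm_cast; omega) hlong
      rw [varsigma_succ hn]
      linarith
    · rw [not_lt] at hlong
      have hle : ∀ i ∈ insert a S, L i ≤ L a := by simpa using hmax
      calc _ ≤ 1 - 1 / (n : ℝ) ^ L a := kraft_sum_le_one_sub_one_div_pow (by omega) _ _ hle h
        _ ≤ 1 - 1 / (n : ℝ) ^ ((#S + 1) / (n - 1)) := by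
          gcongr
          · norm_cast; omega
          · exact hlong.trans (Nat.div_le_div_right (by omega))
        _ ≤ 1 - varsigma n (#S + 1) := by
          linarith [varsigma_le_one_div_pow (n := n) (by omega) (#S + 1)]

theorem stmt13_general (n m s : ℕ) (hn : 2 ≤ n) (hs : s ≤ m)
    (L : Fin s → ℕ)
    (h : ∑ i, (1 : ℝ) / (n : ℝ) ^ L i < 1) :
    ∑ i, (1 : ℝ) / (n : ℝ) ^ L i ≤ 1 - varsigma n m := by
  have hkraft := kraft_sum_le_one_sub_varsigma hn univ L h
  rw [card_univ, Fintype.card_fin] at hkraft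
  linarith [varsigma_antitone hn hs]

/-- Proposition 1: if `L` is a sequence of positive integers of length `s ≤ m` whose
Kraft sum `σ_n(L) = Σ_i n^{-L i}` is `< 1`, then `σ_n(L) ≤ 1 - ς_{n,m}`. -/
theorem stmt13 (n m s : ℕ) (hn : 2 ≤ n) (hm : 1 ≤ m) (hs : s ≤ m)
    (L : Fin s → ℕ) (hL : ∀ i, 1 ≤ L i)
    (h : ∑ i, (1 : ℝ) / (n : ℝ) ^ L i < 1) :
    ∑ i, (1 : ℝ) / (n : ℝ) ^ L i ≤ 1 - varsigma n m :=
  stmt13_general n m s hn hs L h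
end

section
/- Let m ≥ 1 and n ≥ 2 be integers, and let (r_1,…,r_t) and (ν_1,…,ν_t) be sequences of positive integers such that Σ_{j=1}^t r_j = m and the ν_j are pairwise distinct. If for some 1 ≤ i ≤ t the sum Σ_{j=1}^i r_j/n^{ν_j} is strictly less than 1, then Σ_{j=1}^i r_j/n^{ν_j} ≤ 1 − ς_{n,m}. -/
/-!
Multiplying by `n ^ N`, with `N` the largest exponent, turns the sum into `A / n ^ N` for a
natural number `A < n ^ N` whose base-`n` digit sum is at most `m`: digit sums are subadditive
and `n ^ e` has digit sum `1`. Peeling off the leading digit `a` of `A`, induction on `N` bounds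
`A / n ^ (N + 1)` by `(a + (1 - ς_{n,m-a})) / n`, which never exceeds `1 - ς_{n,m}`; for
`a = n - 1` this is an equality, because `ς_{n,m+n-1} = ς_{n,m} / n`.
-/

open Finset Filter Topology

namespace Nat

variable {n : ℕ}

theorem sub_one_mul_sum_range_div_pow_eq_sub_sum_digits (hn : 2 ≤ n) {x K : ℕ}
    (hx : x < n ^ K) :
    (n - 1) * ∑ i ∈ range K, x / n ^ (i + 1) = x - (n.digits x).sum := by
  rcases eq_or_ne x 0 with rfl | hx0
  · simp
  rw [← sub_one_mul_sum_log_div_pow_eq_sub_sum_digits, eq_comm]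
  congr 1
  refine sum_subset (range_subset_range.2 (log_lt_of_lt_pow hx0 hx)) fun i hi hlog => ?_
  simp only [mem_range, not_lt] at hi hlog
  exact Nat.div_eq_of_lt ((lt_pow_succ_log_self (by omega) x).trans_le
    (Nat.pow_le_pow_right (by omega) (by omega)))

theorem sum_digits_add_le (hn : 2 ≤ n) (x y : ℕ) :
    (n.digits (x + y)).sum ≤ (n.digits x).sum + (n.digits y).sum := by
  have hK : x + y < n ^ (x + y) := Nat.lt_pow_self (by omega)
  have hx := sub_one_mul_sum_range_div_pow_eq_sub_sum_digits hn (K := x + y)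
    (lt_of_le_of_lt (le_add_right x y) hK)
  have hy := sub_one_mul_sum_range_div_pow_eq_sub_sum_digits hn (K := x + y)
    (lt_of_le_of_lt (le_add_left y x) hK)
  have hxy := sub_one_mul_sum_range_div_pow_eq_sub_sum_digits hn hK
  have hfloor :
      ∑ i ∈ range (x + y), x / n ^ (i + 1) + ∑ i ∈ range (x + y), y / n ^ (i + 1) ≤
        ∑ i ∈ range (x + y), (x + y) / n ^ (i + 1) := by
    rw [← sum_add_distrib]
    exact sum_le_sum fun i _ => div_add_div_le_add_div
  have := Nat.mul_le_mul_left (n - 1) hfloor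
  rw [mul_add, hx, hy, hxy] at this
  have := digit_sum_le n x
  have := digit_sum_le n y
  have := digit_sum_le n (x + y)
  omega

theorem sum_digits_base_pow (hn : 2 ≤ n) (e : ℕ) : (n.digits (n ^ e)).sum = 1 := by
  simpa [digits_of_lt n 1 one_ne_zero (by omega)] using
    congrArg List.sum (digits_base_pow_mul (b := n) (k := e) (m := 1) (by omega) one_pos)

theorem sum_digits_sum_mul_pow_le (hn : 2 ≤ n) {ι : Type*} (F : Finset ι) (r e : ι → ℕ) :
    (n.digits (∑ j ∈ F, r j * n ^ e j)).sum ≤ ∑ j ∈ F, r j := by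
  have subadd := sum_digits_add_le hn
  calc (n.digits (∑ j ∈ F, r j * n ^ e j)).sum
      ≤ ∑ j ∈ F, (n.digits (r j * n ^ e j)).sum :=
        le_sum_of_subadditive (fun x => (n.digits x).sum) (by simp) subadd F _
    _ ≤ ∑ j ∈ F, r j := sum_le_sum fun j _ => by
        simpa [sum_digits_base_pow hn] using
          le_sum_of_subadditive (fun x => (n.digits x).sum) (by simp) subadd (range (r j))
            fun _ => n ^ e j

theorem sum_digits_of_lt {a : ℕ} (ha : a < n) : (n.digits a).sum = a := by
  rcases eq_or_ne a 0 with rfl | h0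
  · simp
  · simp [digits_of_lt n a h0 ha]

theorem sum_digits_eq_sum_digits_mod_add_sum_digits_div (hn : 2 ≤ n) (x N : ℕ) :
    (n.digits x).sum = (n.digits (x % n ^ N)).sum + (n.digits (x / n ^ N)).sum := by
  have hlt : ∀ L : List ℕ, L.Sublist (n.digits x) → ∀ d ∈ L, d < n :=
    fun L hL d hd => digits_lt_base (by omega) (hL.subset hd)
  rw [self_mod_pow_eq_ofDigits_take N x hn, self_div_pow_eq_ofDigits_drop N x hn,
    sum_digits_ofDigits_eq_sum (by omega) ⟨rfl, hlt _ (List.take_sublist _ _)⟩,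
    sum_digits_ofDigits_eq_sum (by omega) ⟨rfl, hlt _ (List.drop_sublist _ _)⟩,
    List.sum_take_add_sum_drop]

end Nat

section Varsigma

variable {n : ℕ}

theorem varsigma_nonneg (hn : 2 ≤ n) (M : ℕ) : 0 ≤ varsigma n M := by
  have : ((M % (n - 1) : ℕ) : ℝ) ≤ n := by
    exact_mod_cast (Nat.mod_lt M (by omega)).le.trans (Nat.sub_le n 1)
  exact div_nonneg (sub_nonneg.2 this) (by positivity)

theorem varsigma_le_one (hn : 2 ≤ n) (M : ℕ) : varsigma n M ≤ 1 := by
  have hn1 : (1 : ℝ) ≤ n := by exact_mod_cast (by omega : 1 ≤ n)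
  unfold varsigma
  rw [div_le_one (by positivity)]
  calc (n : ℝ) - (M % (n - 1) : ℕ) ≤ n := sub_le_self _ (Nat.cast_nonneg _)
    _ ≤ (n : ℝ) ^ (M / (n - 1) + 1) := le_self_pow₀ hn1 (Nat.succ_ne_zero _)

theorem varsigma_add_sub_one (hn : 2 ≤ n) (M : ℕ) :
    varsigma n (M + (n - 1)) = varsigma n M / n := by
  unfold varsigma
  rw [Nat.add_mod_right, Nat.add_div_right _ (by omega), pow_succ _ (M / (n - 1) + 1), div_div]

theorem varsigma_of_lt {M : ℕ} (hM : M < n - 1) : varsigma n M = (n - M) / n := by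
  unfold varsigma
  rw [Nat.mod_eq_of_lt hM, Nat.div_eq_of_lt hM, zero_add, pow_one]

theorem varsigma_le_inv (hn : 2 ≤ n) {M : ℕ} (hM : n - 1 ≤ M) : varsigma n M ≤ 1 / n := by
  obtain ⟨M, rfl⟩ : ∃ M', M = M' + (n - 1) := ⟨M - (n - 1), by omega⟩
  rw [varsigma_add_sub_one hn]
  exact div_le_div_of_nonneg_right (varsigma_le_one hn M) (Nat.cast_nonneg n)

theorem add_one_sub_varsigma_sub_div_le (hn : 2 ≤ n) {a M : ℕ} (haM : a ≤ M) (han : a < n) :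
    (a + (1 - varsigma n (M - a))) / n ≤ 1 - varsigma n M := by
  have hnR : (0 : ℝ) < n := by positivity
  rw [div_le_iff₀ hnR]
  rcases lt_or_ge M (n - 1) with hM | hM
  · rw [varsigma_of_lt hM, varsigma_of_lt (by omega), Nat.cast_sub haM]
    field_simp
    have hn1 : (1 : ℝ) ≤ n := by exact_mod_cast (by omega : 1 ≤ n)
    have haMR : (a : ℝ) ≤ M := by exact_mod_cast haM
    nlinarith [mul_nonneg (sub_nonneg.2 haMR) (sub_nonneg.2 hn1)]
  rcases eq_or_lt_of_le (Nat.le_sub_one_of_lt han) with rfl | ha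
  · have := varsigma_add_sub_one hn (M - (n - 1))
    rw [Nat.sub_add_cancel hM] at this
    rw [this, sub_mul, div_mul_cancel₀ _ hnR.ne', Nat.cast_sub (by omega), Nat.cast_one]
    linarith
  · have hςM : varsigma n M * n ≤ 1 := by
      have := varsigma_le_inv hn hM
      rwa [le_div_iff₀ hnR] at this
    have := varsigma_nonneg hn (M - a)
    have : (a : ℝ) + 2 ≤ n := by exact_mod_cast (by omega : a + 2 ≤ n)
    rw [sub_mul, one_mul]
    linarith

theorem div_pow_le_one_sub_varsigma (hn : 2 ≤ n) {N A M : ℕ} (hA : A < n ^ N)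
    (hM : (n.digits A).sum ≤ M) : (A : ℝ) / n ^ N ≤ 1 - varsigma n M := by
  induction N generalizing A M with
  | zero =>
    obtain rfl : A = 0 := by simpa using hA
    simpa using varsigma_le_one hn M
  | succ N ih =>
    set a := A / n ^ N
    set B := A % n ^ N
    have hpos : 0 < n ^ N := by positivity
    have ha : a < n := Nat.div_lt_of_lt_mul (by rwa [← pow_succ])
    have hdigits : (n.digits A).sum = (n.digits B).sum + a := by
      rw [Nat.sum_digits_eq_sum_digits_mod_add_sum_digits_div hn A N]
      change (n.digits B).sum + (n.digits a).sum = _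
      rw [Nat.sum_digits_of_lt ha]
    have hB := ih (A := B) (M := M - a) (Nat.mod_lt A hpos) (by omega)
    have hsplit : (A : ℝ) / n ^ (N + 1) = (a + B / n ^ N) / n := by
      rw [← Nat.div_add_mod A (n ^ N)]
      push_cast
      field_simp
      ring
    calc (A : ℝ) / n ^ (N + 1) = (a + B / n ^ N) / n := hsplit
      _ ≤ (a + (1 - varsigma n (M - a))) / n := by gcongr
      _ ≤ 1 - varsigma n M := add_one_sub_varsigma_sub_div_le hn (by omega) ha

theorem sum_div_pow_le_one_sub_varsigma (hn : 2 ≤ n) {ι : Type*} (F : Finset ι)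
    (r ν : ι → ℕ) {M : ℕ} (hM : ∑ j ∈ F, r j ≤ M) (h : ∑ j ∈ F, (r j : ℝ) / n ^ ν j < 1) :
    ∑ j ∈ F, (r j : ℝ) / n ^ ν j ≤ 1 - varsigma n M := by
  set N := F.sup ν
  set A := ∑ j ∈ F, r j * n ^ (N - ν j)
  have hA : (A : ℝ) / n ^ N = ∑ j ∈ F, (r j : ℝ) / n ^ ν j := by
    rw [Nat.cast_sum, sum_div]
    refine sum_congr rfl fun j hj => ?_
    have hpow : (n : ℝ) ^ N = n ^ (N - ν j) * n ^ ν j := by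
      rw [← pow_add, Nat.sub_add_cancel (le_sup hj)]
    rw [hpow]
    push_cast
    field_simp
  rw [← hA] at h ⊢
  refine div_pow_le_one_sub_varsigma hn ?_ ((Nat.sum_digits_sum_mul_pow_le hn F r _).trans hM)
  exact_mod_cast (div_lt_one (by positivity)).1 h

end Varsigma

theorem stmt14_general (n m t : ℕ) (hn : 2 ≤ n) (r ν : ℕ → ℕ)
    (hsum : ∑ j ∈ Finset.Icc 1 t, r j = m)
    (i : ℕ) (hit : i ≤ t)
    (h : ∑ j ∈ Finset.Icc 1 i, (r j : ℝ) / (n : ℝ) ^ ν j < 1) :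
    ∑ j ∈ Finset.Icc 1 i, (r j : ℝ) / (n : ℝ) ^ ν j ≤ 1 - varsigma n m :=
  sum_div_pow_le_one_sub_varsigma hn _ r ν
    (hsum ▸ sum_le_sum_of_subset (Icc_subset_Icc_right hit)) h

/-- Corollary 4: if `(r 1,…,r t)` and `(ν 1,…,ν t)` are sequences of positive integers
with `Σ_j r j = m` and the `ν j` pairwise distinct, and for some `1 ≤ i ≤ t` the sum
`Σ_{j=1}^i r j / n^{ν j}` is `< 1`, then this sum is `≤ 1 - ς_{n,m}`. -/
theorem stmt14 (n m t : ℕ) (hn : 2 ≤ n) (hm : 1 ≤ m) (r ν : ℕ → ℕ)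
    (hr : ∀ j, 1 ≤ j → j ≤ t → 1 ≤ r j)
    (hνpos : ∀ j, 1 ≤ j → j ≤ t → 1 ≤ ν j)
    (hν : ∀ j j', 1 ≤ j → j ≤ t → 1 ≤ j' → j' ≤ t → j ≠ j' → ν j ≠ ν j')
    (hsum : ∑ j ∈ Finset.Icc 1 t, r j = m)
    (i : ℕ) (hi1 : 1 ≤ i) (hit : i ≤ t)
    (h : ∑ j ∈ Finset.Icc 1 i, (r j : ℝ) / (n : ℝ) ^ ν j < 1) :
    ∑ j ∈ Finset.Icc 1 i, (r j : ℝ) / (n : ℝ) ^ ν j ≤ 1 - varsigma n m :=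
  stmt14_general n m t hn r ν hsum i hit h
end

section
/- For all integers n ≥ 2 and r ≥ 1, the limit as a → ∞ of Σ_{i=1}^{r} Σ_{k=1}^{a−1} [binom(n^{a−k} − n^{a−k−1}, i) · binom(n^a − n^{a−1} − i·n^k, r−i)] / binom(n^a − n^{a−1}, r) equals Σ_{i=1}^{r} binom(r, i)/(n^i − 1) (that is, η_{n,r+1} − 1, where η_{n,m} := 1 + Σ_{i=1}^{m−1} binom(m−1, i)/(n^i − 1)). -/
open Finset Filter Topology

/-! With `m = n^(a-k) - n^(a-k-1)` and `c = n^k` one has `n^a - n^(a-1) = m c`, so the `(i, k)`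
summand is `C(m, i) C(mc - ic, r - i) / C(mc, r)`. For fixed `k`, `m → ∞` as `a → ∞`, and
`C(N, j) ~ N^j / j!` shows that the summand tends to `C(r, i) / c^i = C(r, i) n^(-ik)`. The same
quantity bounds it uniformly in `a`, because `C(m, i) c^i ≤ C(mc, i)`, so by Tannery's theorem the
inner sum tends to `∑_{k ≥ 1} C(r, i) n^(-ik) = C(r, i) / (n^i - 1)`. -/

open Asymptotics Nat

lemma tendsto_finset_sum_of_dominated_convergence {α β G : Type*} {𝓕 : Filter α}
    [NormedAddCommGroup G] [CompleteSpace G] {s : α → Finset β} {f : α → β → G} {g : β → G}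
    {bound : β → ℝ} (h_sum : Summable bound) (hs : ∀ k, ∀ᶠ a in 𝓕, k ∈ s a)
    (hab : ∀ k, Tendsto (f · k) 𝓕 (𝓝 (g k))) (h_bound : ∀ a, ∀ k ∈ s a, ‖f a k‖ ≤ bound k) :
    Tendsto (fun a => ∑ k ∈ s a, f a k) 𝓕 (𝓝 (∑' k, g k)) := by
  have h := tendsto_tsum_of_dominated_convergence (f := fun a => (s a : Set β).indicator (f a))
    h_sum.abs (fun k => (hab k).congr' ((hs k).mono fun a ha => by simp [ha]))
    (Eventually.of_forall fun a k => ?_)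
  · simpa only [← sum_eq_tsum_indicator] using h
  · by_cases hk : k ∈ s a
    · simpa [hk] using (h_bound a k hk).trans (le_abs_self _)
    · simp [hk]

lemma descFactorial_mul_pow_le (m c i : ℕ) :
    m.descFactorial i * c ^ i ≤ (m * c).descFactorial i := by
  have hpow : c ^ i = ∏ _l ∈ range i, c := by simp
  rw [descFactorial_eq_prod_range, descFactorial_eq_prod_range, hpow, ← prod_mul_distrib]
  refine prod_le_prod' fun l _ => ?_
  rcases c with _ | c
  · simp
  · rw [Nat.sub_mul]
    have hl : l ≤ l * (c + 1) := Nat.le_mul_of_pos_right l c.succ_pos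
    omega

lemma choose_mul_pow_le (m c i : ℕ) : m.choose i * c ^ i ≤ (m * c).choose i := by
  have h := descFactorial_mul_pow_le m c i
  rw [descFactorial_eq_factorial_mul_choose, descFactorial_eq_factorial_mul_choose, mul_assoc] at h
  exact Nat.le_of_mul_le_mul_left h (factorial_pos i)

lemma choose_mul_choose_sub_mul_le {m c r i : ℕ} (hc : 0 < c) (hir : i ≤ r) :
    m.choose i * (m * c - i * c).choose (r - i) * c ^ i ≤ r.choose i * (m * c).choose r :=
  calc m.choose i * (m * c - i * c).choose (r - i) * c ^ i
      = m.choose i * c ^ i * (m * c - i * c).choose (r - i) := by ring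
    _ ≤ (m * c).choose i * (m * c - i).choose (r - i) :=
        Nat.mul_le_mul (choose_mul_pow_le m c i)
          (choose_le_choose _ (Nat.sub_le_sub_left (Nat.le_mul_of_pos_right i hc) _))
    _ = r.choose i * (m * c).choose r := by rw [← choose_mul hir, mul_comm]

lemma choose_mul_choose_div_choose_le {m c r i : ℕ} (hc : 0 < c) (hir : i ≤ r) :
    ((m.choose i * (m * c - i * c).choose (r - i) : ℕ) : ℝ) / ((m * c).choose r : ℕ)
      ≤ r.choose i / (c : ℝ) ^ i := by
  rcases ((m * c).choose r).eq_zero_or_pos with h | h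
  · simp only [h, CharP.cast_eq_zero, div_zero]
    positivity
  · rw [div_le_div_iff₀ (by exact_mod_cast h) (by positivity)]
    exact_mod_cast choose_mul_choose_sub_mul_le hc hir

lemma isEquivalent_choose_sub (s j : ℕ) :
    (fun N : ℕ => ((N - s).choose j : ℝ)) ~[atTop] fun N => (N : ℝ) ^ j / j ! := by
  have hsub : (fun N : ℕ => ((N - s : ℕ) : ℝ)) ~[atTop] fun N => (N : ℝ) := by
    refine (IsEquivalent.refl.sub_isLittleO
      ((isLittleO_const_id_atTop (s : ℝ)).comp_tendsto tendsto_natCast_atTop_atTop)).congr_left ?_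
    filter_upwards [eventually_ge_atTop s] with N hN
    simp [Nat.cast_sub hN]
  exact ((isEquivalent_choose j).comp_tendsto (tendsto_sub_atTop_nat s)).trans
    ((hsub.pow j).div IsEquivalent.refl)

lemma tendsto_choose_mul_choose_div_choose {c r i : ℕ} (hc : 0 < c) (hir : i ≤ r) :
    Tendsto (fun m : ℕ =>
        ((m.choose i * (m * c - i * c).choose (r - i) : ℕ) : ℝ) / ((m * c).choose r : ℕ))
      atTop (𝓝 (r.choose i / (c : ℝ) ^ i)) := by
  have hmc : Tendsto (fun m : ℕ => m * c) atTop atTop :=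
    tendsto_id.atTop_mul_const' hc
  have hequiv := ((isEquivalent_choose i).mul
    ((isEquivalent_choose_sub (i * c) (r - i)).comp_tendsto hmc)).div
    ((isEquivalent_choose r).comp_tendsto hmc)
  refine (hequiv.tendsto_nhds_iff.2 (tendsto_const_nhds.congr' ?_)).congr fun m => ?_
  · filter_upwards [eventually_ge_atTop 1] with m hm
    obtain ⟨j, rfl⟩ : ∃ j, r = i + j := ⟨r - i, by omega⟩
    have hm' : (m : ℝ) ≠ 0 := by positivity
    simp only [Pi.mul_apply, Pi.div_apply, Function.comp_apply, Nat.add_sub_cancel_left,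
      cast_add_choose, Nat.cast_mul]
    field_simp
    ring
  · push_cast
    rfl

lemma pow_sub_pow_pred_eq_mul (n : ℕ) {a k : ℕ} (hka : k < a) :
    n ^ a - n ^ (a - 1) = (n ^ (a - k) - n ^ (a - k - 1)) * n ^ k := by
  rw [Nat.sub_mul, ← pow_add, ← pow_add, Nat.sub_add_cancel hka.le,
    show a - k - 1 + k = a - 1 by omega]

lemma tendsto_pow_sub_pow_pred {n : ℕ} (hn : 2 ≤ n) :
    Tendsto (fun b => n ^ b - n ^ (b - 1)) atTop atTop := by
  refine tendsto_atTop_mono' _ ?_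
    ((tendsto_pow_atTop_atTop_of_one_lt hn).comp (tendsto_sub_atTop_nat 1))
  filter_upwards [eventually_ge_atTop 1] with b hb
  have hpow : n ^ b = n ^ (b - 1) * n := by rw [← pow_succ, Nat.sub_add_cancel hb]
  rw [Function.comp_apply, hpow, ← Nat.mul_sub_one]
  exact Nat.le_mul_of_pos_right _ (by omega)

lemma hasSum_div_pow_succ {x : ℝ} (hx : 1 < x) (c : ℝ) :
    HasSum (fun j : ℕ => c / x ^ (j + 1)) (c / (x - 1)) := by
  have hx0 : 0 < x := by linarith
  have h := (hasSum_geometric_of_lt_one (inv_nonneg.2 hx0.le) (inv_lt_one_of_one_lt₀ hx)).mul_left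
    (c / x)
  have hterm : (fun j : ℕ => c / x ^ (j + 1)) = fun j => c / x * x⁻¹ ^ j := by
    ext j
    rw [inv_pow, pow_succ]
    field_simp
  have hsum : c / (x - 1) = c / x * (1 - x⁻¹)⁻¹ := by
    field_simp
  rwa [hterm, hsum]

theorem tendsto_sum_choose_mul_choose_div_choose {n r i : ℕ} (hn : 2 ≤ n) (hi : 1 ≤ i)
    (hir : i ≤ r) :
    Tendsto (fun a : ℕ => ∑ k ∈ Icc 1 (a - 1),
        (((n ^ (a - k) - n ^ (a - k - 1)).choose i *
            (n ^ a - n ^ (a - 1) - i * n ^ k).choose (r - i) : ℕ) : ℝ) /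
          (((n ^ a - n ^ (a - 1)).choose r : ℕ) : ℝ))
      atTop (𝓝 ((r.choose i : ℝ) / ((n : ℝ) ^ i - 1))) := by
  set T : ℕ → ℕ → ℝ := fun a k =>
    (((n ^ (a - k) - n ^ (a - k - 1)).choose i *
        (n ^ a - n ^ (a - 1) - i * n ^ k).choose (r - i) : ℕ) : ℝ) /
      (((n ^ a - n ^ (a - 1)).choose r : ℕ) : ℝ)
  have hT : ∀ a k, k < a → T a k =
      (((n ^ (a - k) - n ^ (a - k - 1)).choose i *
        ((n ^ (a - k) - n ^ (a - k - 1)) * n ^ k - i * n ^ k).choose (r - i) : ℕ) : ℝ) /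
      ((((n ^ (a - k) - n ^ (a - k - 1)) * n ^ k).choose r : ℕ) : ℝ) := fun a k hka => by
    simp only [T, pow_sub_pow_pred_eq_mul n hka]
  have hgeom := hasSum_div_pow_succ (one_lt_pow₀ (by exact_mod_cast hn : (1 : ℝ) < n)
    (by omega : i ≠ 0)) (r.choose i : ℝ)
  rw [← hgeom.tsum_eq]
  have hshift : ∀ a, ∑ k ∈ Icc 1 (a - 1), T a k = ∑ j ∈ range (a - 1), T a (j + 1) := by
    intro a
    rw [range_eq_Ico, sum_Ico_add', zero_add, Ico_add_one_right_eq_Icc]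
  refine (tendsto_finset_sum_of_dominated_convergence hgeom.summable
    (fun j => (eventually_gt_atTop (j + 2)).mono fun a ha => mem_range.2 (by omega))
    (fun j => ?_) fun a j hj => ?_).congr fun a => (hshift a).symm
  · have hlim : (r.choose i : ℝ) / ((n ^ (j + 1) : ℕ) : ℝ) ^ i
        = r.choose i / ((n : ℝ) ^ i) ^ (j + 1) := by
      push_cast
      ring
    rw [← hlim]
    refine ((tendsto_choose_mul_choose_div_choose (by positivity) hir).comp
      ((tendsto_pow_sub_pow_pred hn).comp (tendsto_sub_atTop_nat (j + 1)))).congr' ?_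
    filter_upwards [eventually_gt_atTop (j + 1)] with a ha
    exact (hT a (j + 1) ha).symm
  · rw [Real.norm_of_nonneg (by positivity), hT a (j + 1) (by simp at hj; omega)]
    calc _ ≤ (r.choose i : ℝ) / ((n ^ (j + 1) : ℕ) : ℝ) ^ i :=
          choose_mul_choose_div_choose_le (by positivity) hir
      _ = r.choose i / ((n : ℝ) ^ i) ^ (j + 1) := by
          push_cast
          ring

theorem stmt15_general (n r : ℕ) (hn : 2 ≤ n) :
    Filter.Tendsto
      (fun a : ℕ =>
        ∑ i ∈ Finset.Icc 1 r, ∑ k ∈ Finset.Icc 1 (a - 1),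
          (((n ^ (a - k) - n ^ (a - k - 1)).choose i *
              (n ^ a - n ^ (a - 1) - i * n ^ k).choose (r - i) : ℕ) : ℝ) /
            (((n ^ a - n ^ (a - 1)).choose r : ℕ) : ℝ))
      Filter.atTop (𝓝 (eta n (r + 1) - 1)) := by
  have heta : eta n (r + 1) - 1 = ∑ i ∈ Icc 1 r, (r.choose i : ℝ) / ((n : ℝ) ^ i - 1) := by
    simp [eta]
  rw [heta]
  exact tendsto_finsetSum _ fun i hi =>
    tendsto_sum_choose_mul_choose_div_choose hn (mem_Icc.1 hi).1 (mem_Icc.1 hi).2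

/-- Lemma 1: for `n ≥ 2`, `r ≥ 1`,
`lim_{a→∞} Σ_{i=1}^r Σ_{k=1}^{a-1} C(n^{a-k}-n^{a-k-1}, i)·C(n^a-n^{a-1}-i·n^k, r-i) / C(n^a-n^{a-1}, r)
  = Σ_{i=1}^r C(r,i)/(n^i-1) = η_{n,r+1} - 1`. -/
theorem stmt15 (n r : ℕ) (hn : 2 ≤ n) (hr : 1 ≤ r) :
    Filter.Tendsto
      (fun a : ℕ =>
        ∑ i ∈ Finset.Icc 1 r, ∑ k ∈ Finset.Icc 1 (a - 1),
          (((n ^ (a - k) - n ^ (a - k - 1)).choose i *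
              (n ^ a - n ^ (a - 1) - i * n ^ k).choose (r - i) : ℕ) : ℝ) /
            (((n ^ a - n ^ (a - 1)).choose r : ℕ) : ℝ))
      Filter.atTop (𝓝 (eta n (r + 1) - 1)) :=
  stmt15_general n r hn
end

section
/- Let n ≥ 2, m ≥ 2, and let a ≥ 2 be an integer with n^a − n^{a−1} ≥ m − 1. Fix a letter x ∈ X, and integers 1 ≤ i ≤ m−1, 1 ≤ k ≤ a−1. Then the cardinality of K_{x,k,i} equals (m−1)! · binom(n^{a−k} − n^{a−k−1}, i) · binom(n^a − n^{a−1} − i·n^k, m−1−i). -/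
open Finset Filter Topology

/-- The set `K_{x,k,i}` of codes `(v 0, …, v (m-1))`: `v 0` is the one-letter word `x`,
the remaining code words are pairwise distinct, and there is a set `T` of `i` nonzero
indices such that each `v j` for `j ∈ T` has the form `x^k w` with `|w| = a-k` and `w`
not beginning with `x`, each `v j` for `j ∉ T`, `j ≠ 0` is a word of length `a` not
beginning with `x`, and no such `w` is a prefix of any such `v j'`. -/
def K (n : ℕ) (m : ℕ) [NeZero m] (a : ℕ) (x : Fin n) (k i : ℕ) :
    Set (Fin m → List (Fin n)) :=
  {v | v 0 = [x] ∧
    (∀ j j' : Fin m, j ≠ 0 → j' ≠ 0 → j ≠ j' → v j ≠ v j') ∧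
    ∃ T : Finset (Fin m), (0 : Fin m) ∉ T ∧ T.card = i ∧
      (∀ j ∈ T, (v j).length = a ∧ (v j).take k = List.replicate k x ∧
        ¬ [x] <+: (v j).drop k) ∧
      (∀ j : Fin m, j ≠ 0 → j ∉ T → (v j).length = a ∧ ¬ [x] <+: v j) ∧
      (∀ j ∈ T, ∀ j' : Fin m, j' ≠ 0 → j' ∉ T → ¬ (v j).drop k <+: v j')}

/-! A code in `K_{x,k,i}` is its first word `[x]` followed by an injective enumeration of the
set `S` of its remaining `m - 1` words, and `S` splits uniquely as `x^k W ∪ U`: the words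
beginning with `x` give the `i`-set `W` of words of length `a - k` not beginning with `x`, and the
others form an `(m-1-i)`-set `U` of words of length `a` not beginning with `x` and with no prefix
in `W`. Since the words of `W` have equal length, their sets of extensions to length `a` are
pairwise disjoint, so exactly `i n^k` of the `n^a - n^{a-1}` words of length `a` not beginning
with `x` are excluded from `U`. Each set `S` is enumerated in `(m-1)!` ways. -/

open Function

section Injections

variable {ι β : Type*}

lemma exists_subset_image_iff_of_injOn [DecidableEq ι] [DecidableEq β] {f : ι → β}
    {D : Finset ι} (hf : Set.InjOn f D) {i : ℕ} {P Q : β → Prop} {R : β → β → Prop} :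
    (∃ T ⊆ D, #T = i ∧ (∀ j ∈ T, P (f j)) ∧ (∀ j ∈ D \ T, Q (f j)) ∧
        ∀ j ∈ T, ∀ j' ∈ D \ T, R (f j) (f j')) ↔
      ∃ A ⊆ D.image f, #A = i ∧ (∀ s ∈ A, P s) ∧ (∀ s ∈ D.image f \ A, Q s) ∧
        ∀ s ∈ A, ∀ s' ∈ D.image f \ A, R s s' := by
  constructor
  · rintro ⟨T, hTD, rfl, hP, hQ, hR⟩
    refine ⟨T.image f, image_subset_image hTD, card_image_of_injOn (hf.mono hTD), ?_⟩
    rw [← image_sdiff_of_injOn hf hTD]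
    simpa only [forall_mem_image] using ⟨hP, hQ, hR⟩
  · rintro ⟨A, hA, rfl, hP, hQ, hR⟩
    obtain ⟨T, hTD, rfl⟩ := subset_image_iff.1 hA
    refine ⟨T, hTD, (card_image_of_injOn (hf.mono hTD)).symm, ?_⟩
    rw [← image_sdiff_of_injOn hf hTD] at hQ hR
    simp only [forall_mem_image] at hP hQ hR
    exact ⟨hP, hQ, hR⟩

lemma exists_equiv_comp_eq_iff [Fintype ι] [DecidableEq β] {f : ι → β} {S : Finset β} :
    (∃ e : ι ≃ S, Subtype.val ∘ e = f) ↔ Injective f ∧ univ.image f = S := by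
  constructor
  · rintro ⟨e, rfl⟩
    refine ⟨Subtype.val_injective.comp e.injective, ?_⟩
    ext s
    simp only [mem_image, mem_univ, true_and, comp_apply]
    exact ⟨by rintro ⟨a, rfl⟩; exact (e a).2, fun hs => ⟨e.symm ⟨s, hs⟩, by simp⟩⟩
  · rintro ⟨hf, rfl⟩
    refine ⟨Equiv.ofBijective (fun a => ⟨f a, mem_image_of_mem f (mem_univ a)⟩)
      ⟨fun a b h => hf (congrArg Subtype.val h), fun ⟨s, hs⟩ => ?_⟩, rfl⟩
    obtain ⟨a, -, rfl⟩ := mem_image.1 hs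
    exact ⟨a, rfl⟩

lemma ncard_injective_image_mem [Fintype ι] [DecidableEq ι] [DecidableEq β]
    {𝒢 : Finset (Finset β)} (h𝒢 : ∀ S ∈ 𝒢, #S = Fintype.card ι) :
    {f : ι → β | Injective f ∧ univ.image f ∈ 𝒢}.ncard =
      #𝒢 * (Fintype.card ι).factorial := by
  let embed (S : Finset β) : (ι ≃ S) ↪ (ι → β) :=
    ⟨fun e => Subtype.val ∘ e, fun e e' h => Equiv.ext fun a => Subtype.ext (congrFun h a)⟩
  have hset : {f : ι → β | Injective f ∧ univ.image f ∈ 𝒢} =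
      ↑(𝒢.biUnion fun S => univ.map (embed S)) := by
    ext f
    simp only [Set.mem_ofPred_eq, coe_biUnion, mem_coe, Finset.mem_map, mem_univ, true_and,
      Set.mem_iUnion, exists_prop]
    constructor
    · rintro ⟨hf, hS⟩
      exact ⟨_, hS, exists_equiv_comp_eq_iff.2 ⟨hf, rfl⟩⟩
    · rintro ⟨S, hS, hf⟩
      obtain ⟨hinj, rfl⟩ := exists_equiv_comp_eq_iff.1 hf
      exact ⟨hinj, hS⟩
  have hdisj : (𝒢 : Set (Finset β)).PairwiseDisjoint fun S => univ.map (embed S) := by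
    intro S _ S' _ hne
    refine disjoint_left.2 fun f hf hf' => hne ?_
    simp only [Finset.mem_map, mem_univ, true_and] at hf hf'
    rw [← (exists_equiv_comp_eq_iff.1 hf).2, ← (exists_equiv_comp_eq_iff.1 hf').2]
  rw [hset, Set.ncard_coe_finset, card_biUnion hdisj, sum_const_nat fun S hS => ?_, mul_comm]
  rw [card_map, card_univ,
    Fintype.card_equiv (Fintype.equivOfCardEq (by rw [Fintype.card_coe, h𝒢 S hS]))]

lemma ncard_setOf_apply_eq_and [DecidableEq ι] (i₀ : ι) (b : β)
    (p : ({j // j ≠ i₀} → β) → Prop) :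
    {v : ι → β | v i₀ = b ∧ p fun j => v j}.ncard = {g | p g}.ncard := by
  have hset : {v : ι → β | v i₀ = b ∧ p fun j => v j} =
      (fun g => (Equiv.funSplitAt i₀ β).symm (b, g)) '' {g | p g} := by
    ext v
    constructor
    · rintro ⟨rfl, hv⟩
      exact ⟨_, hv, (Equiv.funSplitAt i₀ β).symm_apply_apply v⟩
    · rintro ⟨g, hg, rfl⟩
      have hrestrict :
          (fun j : {j // j ≠ i₀} => (Equiv.funSplitAt i₀ β).symm (b, g) j) = g := by
        ext j
        simp [j.2]
      refine ⟨by simp, ?_⟩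
      show p _
      rwa [hrestrict]
  rw [hset]
  exact Set.ncard_image_of_injective _ fun g g' h =>
    Prod.mk_right_injective b ((Equiv.funSplitAt i₀ β).symm.injective h)

lemma ncard_apply_eq_injOn_image_mem [Fintype ι] [DecidableEq ι] [DecidableEq β] (i₀ : ι)
    (b : β) {𝒢 : Finset (Finset β)} (h𝒢 : ∀ S ∈ 𝒢, #S = Fintype.card ι - 1) :
    {v : ι → β | v i₀ = b ∧ Set.InjOn v ↑(univ.erase i₀) ∧
        (univ.erase i₀).image v ∈ 𝒢}.ncard =
      #𝒢 * (Fintype.card ι - 1).factorial := by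
  have hinj (v : ι → β) :
      Set.InjOn v ↑(univ.erase i₀) ↔ Injective fun j : {j // j ≠ i₀} => v j :=
    ⟨fun h j j' hv => Subtype.ext (h (by simpa using j.2) (by simpa using j'.2) hv),
      fun h j hj j' hj' hv => congrArg Subtype.val
        (@h ⟨j, by simpa using hj⟩ ⟨j', by simpa using hj'⟩ hv)⟩
  have himage (v : ι → β) :
      (univ.erase i₀).image v = univ.image fun j : {j // j ≠ i₀} => v j := by
    ext s
    simp
  simp only [hinj, himage]
  rw [ncard_setOf_apply_eq_and i₀ b fun g => Injective g ∧ univ.image g ∈ 𝒢,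
    ncard_injective_image_mem (by simpa [Fintype.card_subtype_compl] using h𝒢)]
  simp [Fintype.card_subtype_compl]

end Injections

namespace Word

section Lists

variable {α : Type*}

lemma not_singleton_prefix_of_prefix {x : α} {w u : List α} (hw : w ≠ []) (hxw : ¬ [x] <+: w)
    (hwu : w <+: u) : ¬ [x] <+: u := fun hxu =>
  hxw (List.prefix_of_prefix_length_le hxu hwu (List.length_pos_iff.2 hw))

lemma singleton_prefix_replicate_append (x : α) {k : ℕ} (hk : 1 ≤ k) (w : List α) :
    [x] <+: List.replicate k x ++ w := by
  obtain ⟨k, rfl⟩ := Nat.exists_eq_add_of_le' hk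
  exact ⟨List.replicate k x ++ w, by simp [List.replicate_succ]⟩

lemma replicate_append_drop {x : α} {k : ℕ} {s : List α} (hs : s.take k = List.replicate k x) :
    List.replicate k x ++ s.drop k = s := by
  rw [← hs, List.take_append_drop]

variable [DecidableEq α]

def tailSet (x : α) (k : ℕ) (W U : Finset (List α)) : Finset (List α) :=
  W.image (List.replicate k x ++ ·) ∪ U

lemma filter_tailSet {x : α} {k : ℕ} (hk : 1 ≤ k) {W U : Finset (List α)}
    (hU : ∀ u ∈ U, ¬ [x] <+: u) :
    (tailSet x k W U).filter ([x] <+: ·) = W.image (List.replicate k x ++ ·) ∧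
      (tailSet x k W U).filter (¬ [x] <+: ·) = U := by
  have hW : ∀ s ∈ W.image (List.replicate k x ++ ·), [x] <+: s := by
    simp only [mem_image]
    rintro _ ⟨w, -, rfl⟩
    exact singleton_prefix_replicate_append x hk w
  rw [tailSet, filter_union, filter_union, filter_true_of_mem hW, filter_false_of_mem hU,
    filter_false_of_mem fun s hs => not_not.2 (hW s hs), filter_true_of_mem hU]
  simp

lemma injOn_tailSet (x : α) {k : ℕ} (hk : 1 ≤ k) :
    Set.InjOn (fun p : (_ : Finset (List α)) × Finset (List α) => tailSet x k p.1 p.2)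
      {p | ∀ u ∈ p.2, ¬ [x] <+: u} := by
  rintro ⟨W, U⟩ hU ⟨W', U'⟩ hU' h
  obtain ⟨hW₁, hU₁⟩ := filter_tailSet hk hU
  obtain ⟨hW₂, hU₂⟩ := filter_tailSet hk hU'
  dsimp only at h hW₁ hU₁ hW₂ hU₂
  obtain rfl : W = W' := image_injective (List.append_right_injective _) <| by
    rw [← hW₁, ← hW₂, h]
  obtain rfl : U = U' := by rw [← hU₁, ← hU₂, h]
  rfl

lemma card_tailSet {x : α} {k : ℕ} (hk : 1 ≤ k) {W U : Finset (List α)}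
    (hU : ∀ u ∈ U, ¬ [x] <+: u) : #(tailSet x k W U) = #W + #U := by
  obtain ⟨hW₁, hU₁⟩ := filter_tailSet (W := W) hk hU
  rw [← card_filter_add_card_filter_not ([x] <+: ·), hW₁, hU₁,
    card_image_of_injective _ (List.append_right_injective _)]

end Lists

section Counting

variable {α : Type*} [Fintype α]

variable (α) in
def ofLength (l : ℕ) : Finset (List α) :=
  univ.map ⟨Subtype.val, Subtype.val_injective⟩ (α := List.Vector α l)

@[simp]
lemma mem_ofLength {l : ℕ} {w : List α} : w ∈ ofLength α l ↔ w.length = l :=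
  ⟨by simp only [ofLength, Finset.mem_map]; rintro ⟨v, -, rfl⟩; exact v.2,
    fun h => Finset.mem_map.2 ⟨⟨w, h⟩, mem_univ _, rfl⟩⟩

lemma card_ofLength (l : ℕ) : #(ofLength α l) = Fintype.card α ^ l := by
  simp [ofLength, card_vector]

variable [DecidableEq α]

lemma card_filter_prefix_ofLength {w : List α} {l : ℕ} (hw : w.length ≤ l) :
    #((ofLength α l).filter (w <+: ·)) = Fintype.card α ^ (l - w.length) := by
  rw [← card_ofLength,
    ← card_image_of_injective (ofLength α (l - w.length)) (List.append_right_injective w)]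
  congr 1
  ext u
  simp only [mem_filter, mem_ofLength, mem_image]
  constructor
  · rintro ⟨hu, t, rfl⟩
    exact ⟨t, by rw [List.length_append] at hu; omega, rfl⟩
  · rintro ⟨t, ht, rfl⟩
    exact ⟨by rw [List.length_append]; omega, List.prefix_append w t⟩

def notStartingWith (x : α) (l : ℕ) : Finset (List α) :=
  (ofLength α l).filter (¬ [x] <+: ·)

lemma card_notStartingWith (x : α) {l : ℕ} (hl : 1 ≤ l) :
    #(notStartingWith x l) = Fintype.card α ^ l - Fintype.card α ^ (l - 1) := by
  rw [notStartingWith, filter_not, card_sdiff_of_subset (filter_subset _ _), card_ofLength,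
    card_filter_prefix_ofLength (by simpa using hl)]
  rfl

def avoidingPrefixes (x : α) (l : ℕ) (W : Finset (List α)) : Finset (List α) :=
  (notStartingWith x l).filter fun u => ∀ w ∈ W, ¬ w <+: u

lemma not_singleton_prefix_of_mem_avoidingPrefixes {x : α} {l : ℕ} {W : Finset (List α)}
    {u : List α} (hu : u ∈ avoidingPrefixes x l W) : ¬ [x] <+: u :=
  (mem_filter.1 (mem_filter.1 hu).1).2

lemma card_avoidingPrefixes (x : α) {W : Finset (List α)} {j l : ℕ}
    (hW : W ⊆ notStartingWith x j) (hj : 1 ≤ j) (hjl : j ≤ l) :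
    #(avoidingPrefixes x l W) =
      Fintype.card α ^ l - Fintype.card α ^ (l - 1) - #W * Fintype.card α ^ (l - j) := by
  have hlen : ∀ w ∈ W, w.length = j := fun w hw => by
    simpa [notStartingWith] using (mem_filter.1 (hW hw)).1
  have hextensions : (notStartingWith x l).filter (fun u => ∃ w ∈ W, w <+: u) =
      W.biUnion fun w => (ofLength α l).filter (w <+: ·) := by
    ext u
    simp only [notStartingWith, mem_filter, mem_biUnion]
    constructor
    · rintro ⟨⟨hu, -⟩, w, hw, hwu⟩
      exact ⟨w, hw, hu, hwu⟩
    · rintro ⟨w, hw, hu, hwu⟩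
      have hw' := (mem_filter.1 (hW hw)).2
      refine ⟨⟨hu, not_singleton_prefix_of_prefix ?_ hw' hwu⟩, w, hw, hwu⟩
      rintro rfl
      simp [← hlen _ hw] at hj
  have hdisj : (W : Set (List α)).PairwiseDisjoint fun w => (ofLength α l).filter (w <+: ·) := by
    intro w hw w' hw' hne
    refine disjoint_left.2 fun u hu hu' => hne ?_
    exact (List.prefix_of_prefix_length_le (mem_filter.1 hu).2 (mem_filter.1 hu').2
      (by rw [hlen w hw, hlen w' hw'])).eq_of_length (by rw [hlen w hw, hlen w' hw'])
  have hsplit := card_filter_add_card_filter_not (s := notStartingWith x l)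
    fun u => ∃ w ∈ W, w <+: u
  simp only [not_exists, not_and] at hsplit
  rw [hextensions, card_biUnion hdisj, sum_const_nat (m := Fintype.card α ^ (l - j)) fun w hw => by
    rw [card_filter_prefix_ofLength (hlen w hw ▸ hjl), hlen w hw],
    card_notStartingWith x (hj.trans hjl)] at hsplit
  rw [avoidingPrefixes]
  omega

def tailFamily (x : α) (k l i r : ℕ) : Finset (Finset (List α)) :=
  (((notStartingWith x (l - k)).powersetCard i).sigma fun W =>
      (avoidingPrefixes x l W).powersetCard r).image fun p => tailSet x k p.1 p.2

lemma card_tailFamily (x : α) {k l : ℕ} (hk : 1 ≤ k) (hkl : k < l) (i r : ℕ) :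
    #(tailFamily x k l i r) =
      (Fintype.card α ^ (l - k) - Fintype.card α ^ (l - k - 1)).choose i *
        (Fintype.card α ^ l - Fintype.card α ^ (l - 1) - i * Fintype.card α ^ k).choose r := by
  rw [tailFamily, card_image_of_injOn, card_sigma, sum_const_nat, card_powersetCard,
    card_notStartingWith x (by omega)]
  · intro W hW
    obtain ⟨hWsub, rfl⟩ := mem_powersetCard.1 hW
    rw [card_powersetCard, card_avoidingPrefixes x hWsub (by omega) (by omega),
      Nat.sub_sub_self hkl.le]
  · refine Set.InjOn.mono (fun p hp => ?_) (injOn_tailSet x hk)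
    simp only [coe_sigma, Set.mem_sigma_iff, mem_coe, mem_powersetCard] at hp
    exact fun u hu => not_singleton_prefix_of_mem_avoidingPrefixes (hp.2.1 hu)

lemma card_of_mem_tailFamily {x : α} {k l i r : ℕ} (hk : 1 ≤ k) {S : Finset (List α)}
    (hS : S ∈ tailFamily x k l i r) : #S = i + r := by
  simp only [tailFamily, mem_image, mem_sigma, mem_powersetCard] at hS
  obtain ⟨⟨W, U⟩, ⟨⟨-, rfl⟩, hU, rfl⟩, rfl⟩ := hS
  exact card_tailSet hk fun u hu => not_singleton_prefix_of_mem_avoidingPrefixes (hU hu)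

/-- The conditions defining `K_{x,k,i}`, read on the set `S` of remaining code words, with `A`
the part `x^k W` of `S = x^k W ∪ U`. -/
def IsTailSplit (x : α) (k l : ℕ) (S A : Finset (List α)) : Prop :=
  (∀ s ∈ A, s.length = l ∧ s.take k = List.replicate k x ∧ ¬ [x] <+: s.drop k) ∧
    (∀ s ∈ S \ A, s.length = l ∧ ¬ [x] <+: s) ∧
    ∀ s ∈ A, ∀ s' ∈ S \ A, ¬ s.drop k <+: s'

lemma isTailSplit_tailSet {x : α} {k l : ℕ} (hk : 1 ≤ k) (hkl : k ≤ l)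
    {W U : Finset (List α)} (hW : W ⊆ notStartingWith x (l - k))
    (hU : U ⊆ avoidingPrefixes x l W) :
    IsTailSplit x k l (tailSet x k W U) (W.image (List.replicate k x ++ ·)) := by
  have hU' (u : List α) (hu : u ∈ U) :
      u.length = l ∧ ¬ [x] <+: u ∧ ∀ w ∈ W, ¬ w <+: u := by
    simpa [avoidingPrefixes, notStartingWith, and_assoc] using hU hu
  obtain ⟨hA, hSA⟩ := filter_tailSet (W := W) hk fun u hu => (hU' u hu).2.1
  have hdiff : tailSet x k W U \ W.image (List.replicate k x ++ ·) = U := by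
    rw [← hA, ← filter_not, hSA]
  refine ⟨?_, ?_, ?_⟩
  · simp only [mem_image, forall_exists_index, and_imp]
    rintro _ w hw rfl
    obtain ⟨hwl, hwx⟩ := mem_filter.1 (hW hw)
    rw [mem_ofLength] at hwl
    simp [hwx, hwl, hkl]
  · rw [hdiff]
    exact fun u hu => ⟨(hU' u hu).1, (hU' u hu).2.1⟩
  · simp only [hdiff, mem_image, forall_exists_index, and_imp]
    rintro _ w hw rfl u hu
    simpa using (hU' u hu).2.2 w hw

lemma mem_tailFamily_of_isTailSplit {x : α} {k l i r : ℕ} {S A : Finset (List α)}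
    (hAS : A ⊆ S) (hA : #A = i) (hS : #S = i + r) (hsplit : IsTailSplit x k l S A) :
    S ∈ tailFamily x k l i r := by
  obtain ⟨hP, hQ, hR⟩ := hsplit
  have hdrop : Set.InjOn (List.drop k) (A : Set (List α)) := by
    intro s hs s' hs' h
    rw [← replicate_append_drop (hP s hs).2.1, ← replicate_append_drop (hP s' hs').2.1, h]
  have himage : A.image ((List.replicate k x ++ ·) ∘ List.drop k) = A := by
    conv_rhs => rw [← image_id (s := A)]
    exact image_congr fun s hs => replicate_append_drop (hP s hs).2.1
  refine mem_image.2 ⟨⟨A.image (List.drop k), S \ A⟩,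
    mem_sigma.2 ⟨mem_powersetCard.2 ⟨?_, hA ▸ card_image_of_injOn hdrop⟩,
      mem_powersetCard.2 ⟨?_, by rw [card_sdiff_of_subset hAS]; omega⟩⟩, ?_⟩
  · simp only [subset_iff, mem_image, forall_exists_index, and_imp]
    rintro _ s hs rfl
    simp [notStartingWith, (hP s hs).1, (hP s hs).2.2]
  · intro u hu
    simp only [avoidingPrefixes, notStartingWith, mem_filter, mem_ofLength, mem_image,
      forall_exists_index, and_imp]
    exact ⟨hQ u hu, fun _ s hs h => h ▸ hR s hs u hu⟩
  · rw [tailSet, image_image, himage]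
    exact union_sdiff_of_subset hAS

lemma mem_tailFamily_iff {x : α} {k l i r : ℕ} (hk : 1 ≤ k) (hkl : k ≤ l)
    {S : Finset (List α)} (hS : #S = i + r) :
    S ∈ tailFamily x k l i r ↔ ∃ A ⊆ S, #A = i ∧ IsTailSplit x k l S A := by
  refine ⟨fun h => ?_,
    fun ⟨A, hAS, hA, hsplit⟩ => mem_tailFamily_of_isTailSplit hAS hA hS hsplit⟩
  simp only [tailFamily, mem_image, mem_sigma, mem_powersetCard] at h
  obtain ⟨⟨W, U⟩, ⟨⟨hW, rfl⟩, hU, -⟩, rfl⟩ := h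
  exact ⟨_, subset_union_left, card_image_of_injective _ (List.append_right_injective _),
    isTailSplit_tailSet hk hkl hW hU⟩

end Counting

end Word

lemma mem_K_iff {n m a : ℕ} [NeZero m] {x : Fin n} {k i : ℕ} (hk : 1 ≤ k) (hka : k ≤ a)
    (him : i ≤ m - 1) {v : Fin m → List (Fin n)} :
    v ∈ K n m a x k i ↔ v 0 = [x] ∧ Set.InjOn v ↑(univ.erase 0 : Finset (Fin m)) ∧
      (univ.erase 0).image v ∈ Word.tailFamily x k a i (m - 1 - i) := by
  have hinj : (∀ j j' : Fin m, j ≠ 0 → j' ≠ 0 → j ≠ j' → v j ≠ v j') ↔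
      Set.InjOn v ↑(univ.erase 0 : Finset (Fin m)) := by
    constructor
    · intro h j hj j' hj' hvv
      by_contra hne
      exact h j j' (by simpa using hj) (by simpa using hj') hne hvv
    · intro h j j' hj hj' hne hvv
      exact hne (h (by simpa using hj) (by simpa using hj') hvv)
  refine and_congr_right fun _ => ?_
  rw [hinj]
  refine and_congr_right fun hv => ?_
  have hcard : #((univ.erase 0).image v) = i + (m - 1 - i) := by
    rw [card_image_of_injOn hv, card_erase_of_mem (mem_univ _), card_univ, Fintype.card_fin]
    omega
  rw [Word.mem_tailFamily_iff hk hka hcard]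
  simp only [Word.IsTailSplit, ← exists_subset_image_iff_of_injOn hv]
  simp only [subset_erase, subset_univ, true_and, Finset.mem_sdiff, mem_erase, mem_univ, and_true,
    and_imp]

theorem stmt16_general (n m a : ℕ) [NeZero m] (x : Fin n) (k i : ℕ)
    (him : i ≤ m - 1) (hk1 : 1 ≤ k) (hka : k ≤ a - 1) :
    (K n m a x k i).ncard =
      (m - 1).factorial * (n ^ (a - k) - n ^ (a - k - 1)).choose i *
        (n ^ a - n ^ (a - 1) - i * n ^ k).choose (m - 1 - i) := by
  have hfamily : ∀ S ∈ Word.tailFamily x k a i (m - 1 - i), #S = Fintype.card (Fin m) - 1 :=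
    fun S hS => by rw [Word.card_of_mem_tailFamily hk1 hS, Fintype.card_fin]; omega
  have hK : K n m a x k i = {v | v 0 = [x] ∧ Set.InjOn v ↑(univ.erase 0 : Finset (Fin m)) ∧
      (univ.erase 0).image v ∈ Word.tailFamily x k a i (m - 1 - i)} :=
    Set.ext fun v => mem_K_iff hk1 (by omega) him
  rw [hK, ncard_apply_eq_injOn_image_mem 0 [x] hfamily, Word.card_tailFamily x hk1 (by omega),
    Fintype.card_fin, Fintype.card_fin]
  ring

/-- Lemma 2: `|K_{x,k,i}| = (m-1)! · C(n^{a-k}-n^{a-k-1}, i) · C(n^a-n^{a-1}-i·n^k, m-1-i)`. -/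
theorem stmt16 (n m a : ℕ) [NeZero m] (hn : 2 ≤ n) (hm : 2 ≤ m) (ha : 2 ≤ a)
    (hcard : m - 1 ≤ n ^ a - n ^ (a - 1)) (x : Fin n) (k i : ℕ)
    (hi1 : 1 ≤ i) (him : i ≤ m - 1) (hk1 : 1 ≤ k) (hka : k ≤ a - 1) :
    (K n m a x k i).ncard =
      (m - 1).factorial * (n ^ (a - k) - n ^ (a - k - 1)).choose i *
        (n ^ a - n ^ (a - 1) - i * n ^ k).choose (m - 1 - i) :=
  stmt16_general n m a x k i him hk1 hka
end

section
/- Let n ≥ 2, m ≥ 2, and let a ≥ 2 be an integer. Fix a letter x ∈ X, and integers 1 ≤ i ≤ m−1, 1 ≤ k ≤ a−1. Then every code C ∈ K_{x,k,i} is uniquely decodable but is not a prefix code; its length distribution is L = (1, a, …, a) of length m. -/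
open Finset Filter Topology

/-!
Besides `x`, the code words are the words `x^k w`, where `w` does not begin with `x`, and the
words `u` of length `a` that do not begin with `x`. Reading a message from the left, its first
letter thus determines its first code word, except when that letter is `x`: then the first word
may be `x` or some `x^k w`. If it were `x` in one parsing and `x^k w` in the other, the first
parsing would have to read the next `k - 1` letters as copies of `x` (a word `x^k w'` carries too
long a run of `x`), and then a word `u` starting where `w` starts; since `|w| < a = |u|`, `w`
would be a prefix of `u`, which is excluded. So the first code word of a message is always
determined, and unique decodability follows by induction on the parsing. The code is not a
prefix code since `x` is a prefix of every `x^k w`, and there is at least one of them.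
-/

theorem List.replicate_append_ne_replicate_append_cons {α : Type*} {x y : α} (hy : y ≠ x) :
    ∀ {c k : ℕ}, c < k → ∀ l l' : List α, replicate k x ++ l ≠ replicate c x ++ y :: l'
  | 0, _ + 1, _, _, _ => by simp [replicate_succ, Ne.symm hy]
  | _ + 1, _ + 1, h, l, l' => by
    simpa [replicate_succ] using
      replicate_append_ne_replicate_append_cons hy (Nat.lt_of_succ_lt_succ h) l l'

theorem List.flatten_map_eq_nil_iff {ι α : Type*} {f : ι → List α} (hf : ∀ i, f i ≠ [])
    {l : List ι} : (l.map f).flatten = [] ↔ l = [] := by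
  cases l <;> simp [hf]

section UniqueDecodability

variable {X : Type*} {m : ℕ} {v : Fin m → List X}

theorem isUDCode_of_head_unique (hne : ∀ j, v j ≠ [])
    (hhead : ∀ p q (s t : List (Fin m)),
      v p ++ (s.map v).flatten = v q ++ (t.map v).flatten → p = q) :
    IsUDCode v := by
  intro s
  induction s with
  | nil => exact fun _ h => absurd rfl h
  | cons p s ih =>
    rintro (_ | ⟨q, t⟩) - ht hst
    · exact absurd rfl ht
    simp only [List.map_cons, List.flatten_cons] at hst
    obtain rfl := hhead p q s t hst
    have hst := List.append_cancel_left hst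
    congr 1
    by_cases hs : s = []
    · subst hs
      exact ((List.flatten_map_eq_nil_iff hne).mp (by simpa using hst.symm)).symm
    · refine ih t hs (fun ht => hs ?_) hst
      exact (List.flatten_map_eq_nil_iff hne).mp (by simpa [ht] using hst)

end UniqueDecodability

section KCode

variable {X : Type*} {m a k : ℕ} [NeZero m] {x : X} {v : Fin m → List X} {T : Finset (Fin m)}

/-- The clauses of `K` about `T`: `v ∈ K n m a x k i` unfolds to `v 0 = [x]`, injectivity away
from `0`, and `∃ T, 0 ∉ T ∧ #T = i ∧ IsKSplit v a x k T`. -/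
def IsKSplit (v : Fin m → List X) (a : ℕ) (x : X) (k : ℕ) (T : Finset (Fin m)) : Prop :=
  (∀ j ∈ T, (v j).length = a ∧ (v j).take k = List.replicate k x ∧ ¬ [x] <+: (v j).drop k) ∧
    (∀ j : Fin m, j ≠ 0 → j ∉ T → (v j).length = a ∧ ¬ [x] <+: v j) ∧
    (∀ j ∈ T, ∀ j' : Fin m, j' ≠ 0 → j' ∉ T → ¬ (v j).drop k <+: v j')

theorem IsKSplit.length_eq (hK : IsKSplit v a x k T) {j : Fin m} (hj : j ≠ 0) :
    (v j).length = a :=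
  if hjT : j ∈ T then (hK.1 j hjT).1 else (hK.2.1 j hj hjT).1

theorem IsKSplit.singleton_prefix (hK : IsKSplit v a x k T) (hk : 0 < k) {j : Fin m}
    (hj : j ∈ T) : [x] <+: v j := by
  rw [← List.take_append_drop k (v j), (hK.1 j hj).2.1]
  exact (List.prefix_replicate_iff.mpr ⟨hk, rfl⟩).trans (List.prefix_append _ _)

theorem IsKSplit.flatten_ne_replicate_append_drop (hK : IsKSplit v a x k T) (h0 : v 0 = [x])
    (hka : k < a) {q : Fin m} (hq : q ∈ T) (s : List (Fin m)) {c : ℕ} (hc : c < k)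
    (R : List X) : (s.map v).flatten ≠ List.replicate c x ++ ((v q).drop k ++ R) := by
  obtain ⟨hT, hnT, hpre⟩ := hK
  obtain ⟨y, w, hyw⟩ := List.exists_cons_of_ne_nil (l := (v q).drop k)
    (List.ne_nil_of_length_pos (by rw [List.length_drop, (hT q hq).1]; omega))
  have hy : y ≠ x := by rintro rfl; exact (hT q hq).2.2 (hyw ▸ by simp)
  have hw : w.length < a := by
    have := congrArg List.length hyw
    simp only [List.length_drop, (hT q hq).1, List.length_cons] at this
    omega
  rw [hyw, List.cons_append]
  induction s generalizing c with
  | nil => simp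
  | cons h s ih =>
    intro hs
    simp only [List.map_cons, List.flatten_cons] at hs
    by_cases hh0 : h = 0
    · rw [hh0, h0] at hs
      cases c with
      | zero => exact hy (List.cons_eq_cons.mp hs).1.symm
      | succ c => exact ih (c := c) (by omega) (by simpa [List.replicate_succ] using hs)
    by_cases hhT : h ∈ T
    · rw [← List.take_append_drop k (v h), (hT h hhT).2.1, List.append_assoc] at hs
      exact List.replicate_append_ne_replicate_append_cons hy hc _ _ hs
    · have hvh : v h <+: List.replicate c x ++ y :: (w ++ R) := hs ▸ List.prefix_append _ _
      have hlen := (hnT h hh0 hhT).1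
      cases c with
      | zero =>
        refine hpre q hq h hh0 hhT (hyw ▸ List.prefix_of_prefix_length_le ?_ hvh ?_)
        · exact ⟨R, by simp⟩
        · simp only [List.length_cons]; omega
      | succ c =>
        refine (hnT h hh0 hhT).2 (List.prefix_of_prefix_length_le ?_ hvh ?_)
        · exact ⟨List.replicate c x ++ y :: (w ++ R), by simp [List.replicate_succ]⟩
        · simp only [List.length_singleton]; omega

theorem IsKSplit.singleton_append_ne_append (hK : IsKSplit v a x k T) (h0 : v 0 = [x])
    (hk : 0 < k) (hka : k < a) {q : Fin m} (hq : q ≠ 0) (s t : List (Fin m)) :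
    [x] ++ (s.map v).flatten ≠ v q ++ (t.map v).flatten := by
  intro h
  by_cases hqT : q ∈ T
  · obtain ⟨k, rfl⟩ : ∃ k', k = k' + 1 := ⟨k - 1, by omega⟩
    rw [← List.take_append_drop (k + 1) (v q), (hK.1 q hqT).2.1, List.replicate_succ,
      List.append_assoc, List.singleton_append, List.cons_append] at h
    exact hK.flatten_ne_replicate_append_drop h0 hka hqT s (Nat.lt_succ_self k) _
      (List.cons_injective h)
  · refine (hK.2.1 q hq hqT).2
      (List.prefix_of_prefix_length_le ⟨_, h⟩ (List.prefix_append _ _) ?_)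
    simp only [List.length_singleton, hK.length_eq hq]
    omega

theorem IsKSplit.eq_of_append_flatten_eq (hK : IsKSplit v a x k T) (h0 : v 0 = [x])
    (hinj : ∀ j j' : Fin m, j ≠ 0 → j' ≠ 0 → j ≠ j' → v j ≠ v j') (hk : 0 < k) (hka : k < a)
    {p q : Fin m} {s t : List (Fin m)}
    (h : v p ++ (s.map v).flatten = v q ++ (t.map v).flatten) : p = q := by
  by_cases hp : p = 0 <;> by_cases hq : q = 0
  · rw [hp, hq]
  · rw [hp, h0] at h
    exact absurd h (hK.singleton_append_ne_append h0 hk hka hq s t)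
  · rw [hq, h0] at h
    exact absurd h.symm (hK.singleton_append_ne_append h0 hk hka hp t s)
  · by_contra hpq
    exact hinj p q hp hq hpq
      (List.append_inj h (by rw [hK.length_eq hp, hK.length_eq hq])).1

end KCode

theorem stmt17_general (n m a : ℕ) [NeZero m]
    (x : Fin n) (k i : ℕ) (hi1 : 1 ≤ i) (hk1 : 1 ≤ k) (hka : k ≤ a - 1)
    (v : Fin m → List (Fin n)) (hv : v ∈ K n m a x k i) :
    IsUDCode v ∧ ¬ IsPrefixCode v ∧
      (v 0).length = 1 ∧ ∀ j : Fin m, j ≠ 0 → (v j).length = a := by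
  obtain ⟨h0, hinj, T, hT0, hTcard, hK⟩ := hv
  have hK : IsKSplit v a x k T := hK
  have hne (j : Fin m) : v j ≠ [] := by
    by_cases hj : j = 0
    · simp [hj, h0]
    · exact List.ne_nil_of_length_pos (by rw [hK.length_eq hj]; omega)
  refine ⟨isUDCode_of_head_unique hne fun _ _ _ _ =>
      hK.eq_of_append_flatten_eq h0 hinj (by omega) (by omega), ?_, by simp [h0],
    fun _ => hK.length_eq⟩
  rintro ⟨-, -, hprefix⟩
  obtain ⟨j, hj⟩ : T.Nonempty := card_pos.mp (by omega)
  exact hprefix 0 j (fun h => hT0 (h ▸ hj)) (h0 ▸ hK.singleton_prefix hk1 hj)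

/-- Every code in `K_{x,k,i}` is uniquely decodable, is not a prefix code, and has
length distribution `(1, a, …, a)`. -/
theorem stmt17 (n m a : ℕ) [NeZero m] (hn : 2 ≤ n) (hm : 2 ≤ m) (ha : 2 ≤ a)
    (x : Fin n) (k i : ℕ) (hi1 : 1 ≤ i) (him : i ≤ m - 1) (hk1 : 1 ≤ k) (hka : k ≤ a - 1)
    (v : Fin m → List (Fin n)) (hv : v ∈ K n m a x k i) :
    IsUDCode v ∧ ¬ IsPrefixCode v ∧
      (v 0).length = 1 ∧ ∀ j : Fin m, j ≠ 0 → (v j).length = a :=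
  stmt17_general n m a x k i hi1 hk1 hka v hv
end

section
/- For any integers n ≥ 2 and a, b ≥ 1, the number of uniquely decodable codes (v, w) over an n-letter alphabet with |v| = a and |w| = b equals n^{a+b} − n^{gcd(a,b)}. -/
open Finset Filter Topology

/-!
A pair `(v, w)` fails to be uniquely decodable exactly when `v ++ w = w ++ v`. Commuting words
give the two parsings `vw = wv`; conversely, from two different parsings one peels the shorter
word `v` off the longer one `w = v ++ z` and obtains two different parsings over `{v, z}`, so
induction on `|v| + |w|` yields commutation. Commuting words of lengths `a` and `b` are exactly
the powers `z ^ (a / g)` and `z ^ (b / g)` of a word `z` of length `g = gcd a b`, so `n ^ g` of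
the `n ^ (a + b)` pairs are not uniquely decodable.
-/

namespace List

variable {α : Type*}

theorem subset_pair_comm {L : List α} {v w : α} (h : L ⊆ [v, w]) : L ⊆ [w, v] :=
  fun _ hu => by simpa [or_comm] using h hu

theorem append_comm_of_nil_mem_pair {v w : List α} (h : [] ∈ [v, w]) : v ++ w = w ++ v := by
  rcases mem_pair.1 h with rfl | rfl <;> simp

theorem exists_flatten_eq_of_subset_pair_append {v z : List α} :
    ∀ {L : List (List α)}, L ⊆ [v, v ++ z] → ∃ L' ⊆ [v, z], L'.flatten = L.flatten
  | [], _ => ⟨[], nil_subset _, rfl⟩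
  | u :: L, h => by
    obtain ⟨hu, hL⟩ := cons_subset.1 h
    obtain ⟨L', hL', hflat⟩ := exists_flatten_eq_of_subset_pair_append hL
    rcases mem_pair.1 hu with rfl | rfl
    · exact ⟨u :: L', cons_subset.2 ⟨by simp, hL'⟩, by simp [hflat]⟩
    · exact ⟨v :: z :: L', by simp [cons_subset, hL'], by simp [hflat]⟩

/-- With `|v| ≤ |w|` write `w = v ++ z`; refactorising over `{v, z}` puts the shorter pair
`v, z` in the same situation, so induct on `|v| + |w|`. -/
theorem append_comm_of_append_flatten_eq {v w : List α} {L M : List (List α)}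
    (hL : L ⊆ [v, w]) (hM : M ⊆ [v, w]) (h : v ++ L.flatten = w ++ M.flatten) :
    v ++ w = w ++ v := by
  induction hn : v.length + w.length using Nat.strong_induction_on generalizing v w L M with
  | _ n ih =>
  wlog hle : v.length ≤ w.length generalizing v w L M
  · exact (this (subset_pair_comm hM) (subset_pair_comm hL) h.symm (by omega) (by omega)).symm
  obtain ⟨z, rfl⟩ : v <+: w :=
    prefix_of_prefix_length_le (prefix_append v _) (h ▸ prefix_append w _) hle
  rw [append_assoc, append_cancel_left_eq] at h
  suffices hvz : v ++ z = z ++ v from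
    (congrArg (v ++ ·) hvz).trans (append_assoc v z v).symm
  by_cases hv : v = []
  · simp [hv]
  obtain ⟨M', hM', hMz⟩ := exists_flatten_eq_of_subset_pair_append hM
  obtain _ | ⟨u, L⟩ := L
  · obtain ⟨rfl, -⟩ := append_eq_nil_iff.1 h.symm
    simp
  obtain ⟨hu, hL⟩ := cons_subset.1 hL
  obtain ⟨L', hL', hLz⟩ := exists_flatten_eq_of_subset_pair_append hL
  have hlt : v.length + z.length < n := by
    have := length_pos_iff.2 hv
    simp only [length_append] at hn
    omega
  rcases mem_pair.1 hu with rfl | rfl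
  · exact ih _ hlt hL' hM' (by simpa [hLz, hMz] using h) rfl
  · exact ih _ hlt (L := z :: L') (by simp [cons_subset, hL']) hM'
      (by simpa [hLz, hMz] using h) rfl

theorem append_comm_of_flatten_eq_of_ne {v w : List α} :
    ∀ {L M : List (List α)}, L ⊆ [v, w] → M ⊆ [v, w] → L.flatten = M.flatten → L ≠ M →
      v ++ w = w ++ v
  | [], [], _, _, _, hne => absurd rfl hne
  | [], u :: M, _, hM, h, _ => by
    obtain ⟨rfl, -⟩ : u = [] ∧ _ := by simpa using h.symm
    exact append_comm_of_nil_mem_pair (cons_subset.1 hM).1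
  | u :: L, [], hL, _, h, _ => by
    obtain ⟨rfl, -⟩ : u = [] ∧ _ := by simpa using h
    exact append_comm_of_nil_mem_pair (cons_subset.1 hL).1
  | u :: L, u' :: M, hL, hM, h, hne => by
    obtain ⟨hu, hL'⟩ := cons_subset.1 hL
    obtain ⟨hu', hM'⟩ := cons_subset.1 hM
    by_cases huu' : u = u'
    · subst huu'
      exact append_comm_of_flatten_eq_of_ne hL' hM' (by simpa using h) (by simpa using hne)
    rcases mem_pair.1 hu with rfl | rfl <;> rcases mem_pair.1 hu' with rfl | rfl
    · exact absurd rfl huu'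
    · exact append_comm_of_append_flatten_eq hL' hM' h
    · exact append_comm_of_append_flatten_eq hM' hL' h.symm
    · exact absurd rfl huu'

theorem flatten_replicate_append_comm (z : List α) (p q : ℕ) :
    (replicate p z).flatten ++ (replicate q z).flatten =
      (replicate q z).flatten ++ (replicate p z).flatten := by
  rw [← flatten_append, ← replicate_add, Nat.add_comm, replicate_add, flatten_append]

theorem eq_of_flatten_replicate_eq {k : ℕ} (hk : k ≠ 0) {z z' : List α}
    (hl : z.length = z'.length) (h : (replicate k z).flatten = (replicate k z').flatten) :
    z = z' := by
  obtain ⟨k, rfl⟩ := Nat.exists_eq_succ_of_ne_zero hk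
  simp only [replicate_succ, flatten_cons] at h
  exact (append_inj h hl).1

/-- The Euclidean algorithm on the lengths: if `w = v ++ z` commutes with `v`, so does `z`. -/
theorem exists_eq_flatten_replicate_of_append_comm {v w : List α} (h : v ++ w = w ++ v) :
    ∃ z : List α, z.length = v.length.gcd w.length ∧
      v = (replicate (v.length / v.length.gcd w.length) z).flatten ∧
      w = (replicate (w.length / v.length.gcd w.length) z).flatten := by
  induction hn : v.length + w.length using Nat.strong_induction_on generalizing v w with
  | _ n ih =>
  wlog hle : v.length ≤ w.length generalizing v w
  · obtain ⟨z, hz, hv, hw⟩ := this h.symm (by omega) (by omega)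
    rw [Nat.gcd_comm] at hz hv hw
    exact ⟨z, hz, hw, hv⟩
  obtain ⟨z, rfl⟩ : v <+: w :=
    prefix_of_prefix_length_le (prefix_append v w) (h ▸ prefix_append w v) hle
  have hvz : v ++ z = z ++ v := by simpa using h
  by_cases hv : v = []
  · subst hv
    rcases eq_or_ne z [] with rfl | hz
    · exact ⟨[], by simp, by simp, by simp⟩
    · exact ⟨z, by simp, by simp, by simp [Nat.div_self (length_pos_iff.2 hz)]⟩
  have hlt : v.length + z.length < n := by
    have := length_pos_iff.2 hv
    simp only [length_append] at hn
    omega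
  obtain ⟨y, hy, hvy, hzy⟩ := ih _ hlt hvz rfl
  have hg : v.length.gcd (v ++ z).length = v.length.gcd z.length := by
    rw [length_append, Nat.add_comm, Nat.gcd_add_self_right]
  refine ⟨y, hg ▸ hy, hg ▸ hvy, ?_⟩
  rw [hg, length_append, Nat.add_div_of_dvd_right (Nat.gcd_dvd_left _ _), replicate_add,
    flatten_append, ← hvy, ← hzy]

end List

open List

section Counting

variable {α : Type*} [Fintype α]

theorem ncard_setOf_length_eq (a : ℕ) :
    {l : List α | l.length = a}.ncard = Fintype.card α ^ a := by
  rw [← Nat.card_coe_set_eq]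
  change Nat.card (List.Vector α a) = _
  rw [Nat.card_eq_fintype_card, card_vector]

theorem ncard_setOf_length_eq_length_eq (a b : ℕ) :
    {p : List α × List α | p.1.length = a ∧ p.2.length = b}.ncard =
      Fintype.card α ^ (a + b) := by
  change ({l : List α | l.length = a} ×ˢ {l : List α | l.length = b}).ncard = _
  rw [Set.ncard_prod, ncard_setOf_length_eq, ncard_setOf_length_eq, pow_add]

theorem ncard_setOf_append_comm (a b : ℕ) :
    {p : List α × List α | p.1.length = a ∧ p.2.length = b ∧ p.1 ++ p.2 = p.2 ++ p.1}.ncard =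
      Fintype.card α ^ a.gcd b := by
  set g := a.gcd b
  have hga : g ∣ a := Nat.gcd_dvd_left a b
  have hgb : g ∣ b := Nat.gcd_dvd_right a b
  set powers : List α → List α × List α :=
    fun z => ((replicate (a / g) z).flatten, (replicate (b / g) z).flatten)
  have himage : {p : List α × List α | p.1.length = a ∧ p.2.length = b ∧
      p.1 ++ p.2 = p.2 ++ p.1} = powers '' {z | z.length = g} := by
    ext ⟨v, w⟩
    constructor
    · rintro ⟨rfl, rfl, h⟩
      obtain ⟨z, hz, hv, hw⟩ := exists_eq_flatten_replicate_of_append_comm h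
      exact ⟨z, hz, Prod.ext hv.symm hw.symm⟩
    · rintro ⟨z, hz : z.length = g, hvw⟩
      obtain ⟨rfl, rfl⟩ := Prod.mk.inj hvw
      refine ⟨?_, ?_, flatten_replicate_append_comm z _ _⟩ <;>
        simp [hz, Nat.div_mul_cancel hga, Nat.div_mul_cancel hgb]
  have hinj : Set.InjOn powers {z | z.length = g} := by
    rcases Nat.eq_zero_or_pos g with hg | hg
    · exact Set.Subsingleton.injOn (fun z hz z' hz' => by simp_all) powers
    intro z (hz : z.length = g) z' (hz' : z'.length = g) h
    have hab : 0 < a + b := Nat.pos_of_ne_zero fun hab => by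
      obtain ⟨rfl, rfl⟩ := Nat.add_eq_zero_iff.1 hab
      simp [g] at hg
    have hk : a / g + b / g ≠ 0 := by
      rw [← Nat.add_div_of_dvd_right hga]
      exact (Nat.div_pos (Nat.le_of_dvd hab (dvd_add hga hgb)) hg).ne'
    apply eq_of_flatten_replicate_eq hk (hz.trans hz'.symm)
    have hcat := congrArg (fun p => p.1 ++ p.2) h
    simpa only [powers, ← flatten_append, ← replicate_add] using hcat
  rw [himage, hinj.ncard_image, ncard_setOf_length_eq]

end Counting

variable {α : Type*}

theorem map_subset_pair (v w : List α) (s : List (Fin 2)) : s.map ![v, w] ⊆ [v, w] := by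
  intro u hu
  obtain ⟨i, -, rfl⟩ := mem_map.1 hu
  fin_cases i <;> simp

theorem isUDCode_pair_iff (v w : List α) : IsUDCode ![v, w] ↔ v ++ w ≠ w ++ v := by
  refine ⟨fun hud hvw => ?_, fun hvw s t _ _ h => ?_⟩
  · simpa using hud [0, 1] [1, 0] (by simp) (by simp) (by simpa using hvw)
  · have hne : v ≠ w := by rintro rfl; exact hvw rfl
    have hinj : Function.Injective ![v, w] := by
      intro i j
      fin_cases i <;> fin_cases j <;> simp [hne, hne.symm]
    by_contra hst
    exact hvw (append_comm_of_flatten_eq_of_ne (map_subset_pair v w s) (map_subset_pair v w t) h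
      ((map_injective_iff.2 hinj).ne hst))

theorem stmt19_general (n : ℕ) (a b : ℕ) :
    {p : List (Fin n) × List (Fin n) |
        p.1.length = a ∧ p.2.length = b ∧ IsUDCode ![p.1, p.2]}.ncard =
      n ^ (a + b) - n ^ Nat.gcd a b := by
  have hUD : {p : List (Fin n) × List (Fin n) |
        p.1.length = a ∧ p.2.length = b ∧ IsUDCode ![p.1, p.2]} =
      {p | p.1.length = a ∧ p.2.length = b} \
        {p | p.1.length = a ∧ p.2.length = b ∧ p.1 ++ p.2 = p.2 ++ p.1} := by
    ext p
    simp only [isUDCode_pair_iff, Set.mem_sdiff, Set.mem_ofPred_eq]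
    tauto
  have hfin : {p : List (Fin n) × List (Fin n) | p.1.length = a ∧ p.2.length = b}.Finite :=
    (finite_length_eq _ a).prod (finite_length_eq _ b)
  have hsub : {p : List (Fin n) × List (Fin n) |
      p.1.length = a ∧ p.2.length = b ∧ p.1 ++ p.2 = p.2 ++ p.1} ⊆
        {p | p.1.length = a ∧ p.2.length = b} := fun _ hp => ⟨hp.1, hp.2.1⟩
  rw [hUD, Set.ncard_sdiff hsub (hfin.subset hsub), ncard_setOf_length_eq_length_eq,
    ncard_setOf_append_comm, Fintype.card_fin]

/-- Theorem 5: `|UD_n((a,b))| = n^{a+b} - n^{gcd(a,b)}`. -/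
theorem stmt19 (n : ℕ) (hn : 2 ≤ n) (a b : ℕ) (ha : 1 ≤ a) (hb : 1 ≤ b) :
    {p : List (Fin n) × List (Fin n) |
        p.1.length = a ∧ p.2.length = b ∧ IsUDCode ![p.1, p.2]}.ncard =
      n ^ (a + b) - n ^ Nat.gcd a b :=
  stmt19_general n a b
end
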